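/- arXiv:2410.19596 — 5 statements merged into one kernel-verified Lean document; each statement's English description precedes it below -/
import Mathlib

section
/- Assume in addition that the support S of μ is convex. Then for every u in the interior of S, the breakdown point satisfies the lower bound BDP(Q_ν(u)) ≥ min{∑_{i∈I} λ_i : ∅ ≠ I ⊆ {1,…,n} such that ∑_{i∈I} λ_i ≥ HD(u,μ)}. -/
open MeasureTheory Metric Filter
open scoped ENNReal NNReal Topology Pointwise

noncomputable section

/-- `Euc d` is the Euclidean space `ℝ^d`. -/
abbrev Euc (d : ℕ) := EuclideanSpace ℝ (Fin d)

open Classical in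
/-- Modified ceiling function: `⌈t⌉` is the usual ceiling for `t ≠ 0`, with `⌈0⌉ = 1`. -/
def mceil (t : ℝ) : ℤ := if t = 0 then 1 else Int.ceil t

/-- `S` is the support of `μ`: the smallest closed set of full `μ`-measure. -/
def IsSupport {d : ℕ} (μ : Measure (Euc d)) (S : Set (Euc d)) : Prop :=
  IsClosed S ∧ μ Sᶜ = 0 ∧ ∀ F : Set (Euc d), IsClosed F → μ Fᶜ = 0 → S ⊆ F

/-- The finitely discrete measure `∑ j λ_j δ_{x_j}`. -/
def discreteMeasure {d m : ℕ} (x : Fin m → Euc d) (l : Fin m → ℝ) : Measure (Euc d) :=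
  ∑ j, ENNReal.ofReal (l j) • Measure.dirac (x j)

/-- The power cell (Laguerre cell) of the atom `x i` with respect to `S`,
for the weight vector `w`. -/
def Lag {d n : ℕ} (S : Set (Euc d)) (x : Fin n → Euc d) (w : Fin n → ℝ) (i : Fin n) :
    Set (Euc d) :=
  {z ∈ S | ∀ j, ‖z - x i‖ ^ 2 - w i ≤ ‖z - x j‖ ^ 2 - w j}

/-- The weight vector `w` is adapted to `(μ, ν)` where `ν = ∑ i λ_i δ_{x_i}`:
each power cell has `μ`-measure `λ_i`. -/
def IsAdapted {d n : ℕ} (μ : Measure (Euc d)) (S : Set (Euc d)) (x : Fin n → Euc d)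
    (l : Fin n → ℝ) (w : Fin n → ℝ) : Prop :=
  ∀ i, μ (Lag S x w i) = ENNReal.ofReal (l i)

/-- `Q` is (a version of) the semi-discrete optimal transport map from `μ`
(with support `S`) to `ν = ∑ i λ_i δ_{x_i}`: it is the power map associated with
an adapted weight vector, `μ`-almost everywhere. -/
def IsOTMap {d n : ℕ} (μ : Measure (Euc d)) (S : Set (Euc d)) (x : Fin n → Euc d)
    (l : Fin n → ℝ) (Q : Euc d → Euc d) : Prop :=
  ∃ w : Fin n → ℝ, IsAdapted μ S x l w ∧ ∀ᵐ z ∂μ, ∃ i, z ∈ Lag S x w i ∧ Q z = x i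

/-- Breakdown occurs for the contamination pattern `I ⊆ {1,…,n}`:
for every `δ > 0`, the supremum over admissible contaminated target measures `ν̃_I`
(which keep atom `x i` with weight `λ_i` for every `i ∉ I`) of
`∫_{B_δ(u)} ‖Q_ν − Q_{ν̃_I}‖ dμ` is infinite. -/
def Breaks {d n : ℕ} (μ : Measure (Euc d)) (S : Set (Euc d)) (x : Fin n → Euc d)
    (l : Fin n → ℝ) (Q : Euc d → Euc d) (u : Euc d) (I : Finset (Fin n)) : Prop :=
  ∀ δ : ℝ, 0 < δ → ∀ M : ℝ,
    ∃ (m : ℕ) (x' : Fin m → Euc d) (l' : Fin m → ℝ) (Q' : Euc d → Euc d),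
      (∀ j, 0 < l' j) ∧ (∑ j, l' j) = 1 ∧
      (∀ i ∈ Iᶜ, ∃ j, x' j = x i) ∧
      (∀ i ∈ Iᶜ, discreteMeasure x' l' {x i} = ENNReal.ofReal (l i)) ∧
      IsOTMap μ S x' l' Q' ∧
      ENNReal.ofReal M < ∫⁻ z in ball u δ, (‖Q z - Q' z‖₊ : ℝ≥0∞) ∂μ

/-- The breakdown point of `Q_ν(u)`: the minimal total contaminated mass
`∑_{i ∈ I} λ_i` over contamination patterns `I` that make the transport map break
down at `u`. -/
def BDP {d n : ℕ} (μ : Measure (Euc d)) (S : Set (Euc d)) (x : Fin n → Euc d)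
    (l : Fin n → ℝ) (Q : Euc d → Euc d) (u : Euc d) : ℝ :=
  sInf {s : ℝ | ∃ I : Finset (Fin n), Breaks μ S x l Q u I ∧ s = ∑ i ∈ I, l i}

/-- The Tukey halfspace depth of `u` with respect to `μ`: the infimum of the
`μ`-measures of the closed halfspaces containing `u`. -/
def tukeyDepth {d : ℕ} (μ : Measure (Euc d)) (u : Euc d) : ℝ :=
  sInf {r : ℝ | ∃ (v : Euc d) (c : ℝ), ‖v‖ = 1 ∧ c ≤ (inner ℝ v u : ℝ) ∧
    r = (μ {z : Euc d | c ≤ (inner ℝ v z : ℝ)}).toReal}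

section Aux
variable {d : ℕ}

lemma lag_mono {m : ℕ} {S : Set (Euc d)} {x' : Fin m → Euc d} {w' : Fin m → ℝ} {a b : Fin m}
    {z w : Euc d} (hz : z ∈ Lag S x' w' a) (hw : w ∈ Lag S x' w' b) :
    0 ≤ (inner ℝ (z - w) (x' a - x' b) : ℝ) := by
  have h1 := hz.2 b
  have h2 := hw.2 a
  have e1 := norm_sub_sq_real z (x' a)
  have e2 := norm_sub_sq_real z (x' b)
  have e3 := norm_sub_sq_real w (x' a)
  have e4 := norm_sub_sq_real w (x' b)
  have expand : (inner ℝ (z - w) (x' a - x' b) : ℝ)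
      = inner ℝ z (x' a) - inner ℝ z (x' b) - inner ℝ w (x' a) + inner ℝ w (x' b) := by
    simp [inner_sub_left, inner_sub_right]; ring
  rw [expand]; nlinarith [h1, h2, e1, e2, e3, e4]

lemma lag_subset {m : ℕ} (S : Set (Euc d)) (x' : Fin m → Euc d) (w' : Fin m → ℝ) (j : Fin m) :
    Lag S x' w' j ⊆ S := fun _ hz => hz.1

lemma lag_cover {m : ℕ} (S : Set (Euc d)) (x' : Fin m → Euc d) (w' : Fin m → ℝ) (hm : 0 < m) :
    S ⊆ ⋃ j, Lag S x' w' j := by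
  intro z hz
  obtain ⟨j, -, hj⟩ := Finset.exists_min_image Finset.univ
    (fun j => ‖z - x' j‖ ^ 2 - w' j) ⟨⟨0, hm⟩, Finset.mem_univ _⟩
  exact Set.mem_iUnion.2 ⟨j, hz, fun j' => hj j' (Finset.mem_univ _)⟩

lemma measure_S_one {μ : Measure (Euc d)} [IsProbabilityMeasure μ] {S : Set (Euc d)}
    (hS : IsSupport μ S) : μ S = 1 := by
  have := measure_add_measure_compl (μ := μ) hS.1.measurableSet
  rw [hS.2.1, add_zero, measure_univ] at this; exact this

lemma support_pos {μ : Measure (Euc d)} {S : Set (Euc d)} (hS : IsSupport μ S)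
    {U : Set (Euc d)} (hU : IsOpen U) (hne : (U ∩ S).Nonempty) : 0 < μ U := by
  rcases hne with ⟨p, hpU, hpS⟩
  rw [pos_iff_ne_zero]
  intro h0
  have hsub : S ⊆ Uᶜ := hS.2.2 Uᶜ hU.isClosed_compl (by rwa [compl_compl])
  exact hsub hpS hpU

open Classical in
lemma discrete_singleton {m : ℕ} (x' : Fin m → Euc d) (l' : Fin m → ℝ)
    (hl' : ∀ j, 0 ≤ l' j) (a : Euc d) {c : ℝ} (hc : 0 ≤ c)
    (h : discreteMeasure x' l' {a} = ENNReal.ofReal c) :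
    ∑ j ∈ Finset.univ.filter (fun j => x' j = a), l' j = c := by
  classical
  have : discreteMeasure x' l' {a}
      = ENNReal.ofReal (∑ j ∈ Finset.univ.filter (fun j => x' j = a), l' j) := by
    rw [discreteMeasure, Measure.finset_sum_apply,
      ENNReal.ofReal_sum_of_nonneg (fun j _ => hl' j)]
    rw [Finset.sum_filter]
    congr 1; ext j
    rw [Measure.smul_apply, smul_eq_mul, Measure.dirac_apply' _ (measurableSet_singleton a)]
    by_cases hj : x' j = a
    · simp [hj]
    · simp [hj, Set.indicator_apply, hj]
  rw [this] at h
  exact (ENNReal.ofReal_eq_ofReal_iff (Finset.sum_nonneg fun j _ => hl' j) hc).1 h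

end Aux

section Aux2
variable {d : ℕ}

lemma lag_empty_of_lt {m : ℕ} {S : Set (Euc d)} {x' : Fin m → Euc d} {w' : Fin m → ℝ}
    {a b : Fin m} (hx : x' a = x' b) (hw : w' a < w' b) : Lag S x' w' a = ∅ := by
  ext z
  simp only [Set.mem_empty_iff_false, iff_false]
  intro hz
  have := hz.2 b
  rw [hx] at this
  linarith

lemma adapted_inj {n : ℕ} {μ : Measure (Euc d)} [IsProbabilityMeasure μ] {S : Set (Euc d)}
    (hS : IsSupport μ S) {x : Fin n → Euc d} {l : Fin n → ℝ} (hl : ∀ i, 0 < l i)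
    (hsum : ∑ i, l i = 1) {w : Fin n → ℝ} (hw : IsAdapted μ S x l w) :
    Function.Injective x := by
  intro a b hab
  by_contra hne
  rcases lt_trichotomy (w a) (w b) with h | h | h
  · have : μ (Lag S x w a) = 0 := by rw [lag_empty_of_lt hab h]; simp
    rw [hw a] at this
    exact absurd this (by simp [ENNReal.ofReal_eq_zero, not_le, hl a])
  · -- equal weights: Lag a = Lag b, so the cells cover S without cell a
    have hLag : Lag S x w a = Lag S x w b := by
      unfold Lag; rw [hab, h]
    have hn : 0 < n := Fin.pos_iff_nonempty.2 ⟨a⟩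
    have hcover : S ⊆ ⋃ j ∈ Finset.univ.erase a, Lag S x w j := by
      intro z hz
      rcases Set.mem_iUnion.1 (lag_cover S x w hn hz) with ⟨j, hj⟩
      by_cases hja : j = a
      · subst hja
        exact Set.mem_biUnion (Finset.mem_erase.2 ⟨Ne.symm hne, Finset.mem_univ _⟩)
          (hLag ▸ hj)
      · exact Set.mem_biUnion (Finset.mem_erase.2 ⟨hja, Finset.mem_univ _⟩) hj
    have hle : (1 : ℝ≥0∞) ≤ ENNReal.ofReal (∑ j ∈ Finset.univ.erase a, l j) := by
      calc (1 : ℝ≥0∞) = μ S := (measure_S_one hS).symm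
        _ ≤ μ (⋃ j ∈ Finset.univ.erase a, Lag S x w j) := measure_mono hcover
        _ ≤ ∑ j ∈ Finset.univ.erase a, μ (Lag S x w j) := measure_biUnion_finset_le _ _
        _ = ∑ j ∈ Finset.univ.erase a, ENNReal.ofReal (l j) := by
            exact Finset.sum_congr rfl fun j _ => hw j
        _ = ENNReal.ofReal (∑ j ∈ Finset.univ.erase a, l j) :=
            (ENNReal.ofReal_sum_of_nonneg fun j _ => (hl j).le).symm
    have hlt : ∑ j ∈ Finset.univ.erase a, l j < 1 := by
      have := Finset.add_sum_erase Finset.univ l (Finset.mem_univ a)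
      have := hl a
      linarith [hsum ▸ (Finset.add_sum_erase Finset.univ l (Finset.mem_univ a))]
    have : (ENNReal.ofReal (∑ j ∈ Finset.univ.erase a, l j) : ℝ≥0∞) < 1 := by
      rw [← ENNReal.ofReal_one]
      exact ENNReal.ofReal_lt_ofReal_iff_of_nonneg
        (Finset.sum_nonneg fun j _ => (hl j).le) |>.2 hlt
    exact absurd (lt_of_le_of_lt hle this) (lt_irrefl _)
  · have : μ (Lag S x w b) = 0 := by rw [lag_empty_of_lt hab.symm h]; simp
    rw [hw b] at this
    exact absurd this (by simp [ENNReal.ofReal_eq_zero, not_le, hl b])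

lemma hyperplane_null {μ : Measure (Euc d)} (hac : μ ≪ volume) {v : Euc d} (hv : ‖v‖ = 1)
    (u : Euc d) : μ {w : Euc d | (inner ℝ v (w - u) : ℝ) = 0} = 0 := by
  have hv0 : v ≠ 0 := by intro h; rw [h, norm_zero] at hv; norm_num at hv
  set W : Submodule ℝ (Euc d) := (ℝ ∙ v)ᗮ with hW
  have hset : {w : Euc d | (inner ℝ v (w - u) : ℝ) = 0}
      = (AffineSubspace.mk' u W : Set (Euc d)) := by
    ext w
    rw [Set.mem_setOf_eq, AffineSubspace.mem_coe, AffineSubspace.mem_mk']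
    have : w -ᵥ u = w - u := rfl
    rw [this, Submodule.mem_orthogonal_singleton_iff_inner_right]
  rw [hset]
  refine hac ?_
  apply Measure.addHaar_affineSubspace
  intro htop
  have hvW : v + u ∈ AffineSubspace.mk' u W := htop ▸ AffineSubspace.mem_top ℝ _ _
  have : v ∈ W := by
    have := AffineSubspace.mem_mk'.1 hvW
    simpa using this
  have h2 := Submodule.mem_orthogonal_singleton_iff_inner_right.1 this
  rw [real_inner_self_eq_norm_sq, hv] at h2
  norm_num at h2

lemma tukey_nonneg_mem {μ : Measure (Euc d)} {u : Euc d} {r : ℝ}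
    (hr : r ∈ {r : ℝ | ∃ (v : Euc d) (c : ℝ), ‖v‖ = 1 ∧ c ≤ (inner ℝ v u : ℝ) ∧
      r = (μ {z : Euc d | c ≤ (inner ℝ v z : ℝ)}).toReal}) : 0 ≤ r := by
  obtain ⟨v, c, -, -, rfl⟩ := hr
  exact ENNReal.toReal_nonneg

lemma tukey_le {μ : Measure (Euc d)} {u : Euc d} {v : Euc d} (hv : ‖v‖ = 1) :
    tukeyDepth μ u ≤ (μ {z : Euc d | (inner ℝ v u : ℝ) ≤ (inner ℝ v z : ℝ)}).toReal := by
  apply csInf_le ⟨0, fun r hr => tukey_nonneg_mem hr⟩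
  exact ⟨v, inner ℝ v u, hv, le_refl _, rfl⟩

end Aux2

section Aux3
variable {d : ℕ}

lemma halfspace_contains {u : Euc d} {r : ℝ} (hr : 0 < r) {v vj : Euc d} (hv : ‖v‖ = 1)
    (hvj : ‖v - vj‖ ≤ 1/16) {c : ℝ} (hc : c ≤ (inner ℝ v u : ℝ)) :
    ball (u + (3*r/4) • vj) (r/16) ⊆ {z : Euc d | c ≤ (inner ℝ v z : ℝ)} := by
  intro w hw
  rw [mem_ball, dist_eq_norm] at hw
  have key : (inner ℝ v (w - u) : ℝ) ≥ 3*r/4 - ‖w - u - (3*r/4) • v‖ := by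
    have h1 : (inner ℝ v (w - u) : ℝ)
        = inner ℝ v ((3*r/4) • v) + inner ℝ v (w - u - (3*r/4) • v) := by
      rw [← inner_add_right]; congr 1; abel
    have h2 : (inner ℝ v ((3*r/4) • v) : ℝ) = 3*r/4 := by
      rw [real_inner_smul_right, real_inner_self_eq_norm_sq, hv]; ring
    have h3 : (inner ℝ v (w - u - (3*r/4) • v) : ℝ) ≥ -‖w - u - (3*r/4) • v‖ := by
      have := abs_real_inner_le_norm v (w - u - (3*r/4) • v)
      rw [hv, one_mul] at this
      linarith [abs_le.1 this]
    linarith [h1, h2, h3]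
  have hnorm : ‖w - u - (3*r/4) • v‖ ≤ r/16 + (3*r/4) * (1/16) := by
    have : w - u - (3*r/4) • v = (w - (u + (3*r/4) • vj)) + (3*r/4) • (vj - v) := by
      rw [smul_sub]; abel
    rw [this]
    refine (norm_add_le _ _).trans (add_le_add hw.le ?_)
    · rw [norm_smul, ← norm_neg (vj - v), neg_sub]
      have : |(3*r/4)| = 3*r/4 := abs_of_nonneg (by linarith)
      rw [Real.norm_eq_abs, this]
      exact mul_le_mul_of_nonneg_left hvj (by linarith)
  have : (inner ℝ v (w - u) : ℝ) > 0 := by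
    have : 3*r/4 - (r/16 + (3*r/4) * (1/16)) > 0 := by nlinarith
    linarith [key, hnorm]
  have hsub : (inner ℝ v (w - u) : ℝ) = inner ℝ v w - inner ℝ v u := inner_sub_right v w u
  simp only [Set.mem_setOf_eq]
  linarith [this, hsub]

lemma depth_pos {μ : Measure (Euc d)} [IsProbabilityMeasure μ] {S : Set (Euc d)}
    (hS : IsSupport μ S) (hd : 0 < d) {u : Euc d} (hu : u ∈ interior S) :
    0 < tukeyDepth μ u := by
  classical
  obtain ⟨r, hr, hball⟩ := Metric.isOpen_iff.1 isOpen_interior u hu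
  have hballS : ball u r ⊆ S := hball.trans interior_subset
  set e : Euc d := EuclideanSpace.single (⟨0, hd⟩ : Fin d) (1:ℝ) with he
  have hunit : ‖e‖ = 1 := by rw [he, EuclideanSpace.norm_single]; norm_num
  -- finite subcover of the sphere
  have hcov : sphere (0 : Euc d) 1 ⊆ ⋃ v ∈ sphere (0 : Euc d) 1, ball v (1/16) := by
    intro v hv; exact Set.mem_biUnion hv (mem_ball_self (by norm_num))
  obtain ⟨t, htsub, htfin, htcover⟩ :=
    (isCompact_sphere (0 : Euc d) 1).elim_finite_subcover_image
      (fun v _ => isOpen_ball) hcov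
  -- the candidate balls
  set f : Euc d → ℝ := fun v => (μ (ball (u + (3*r/4) • v) (r/16))).toReal with hf
  have hballs : ∀ v ∈ t, 0 < f v := by
    intro v hv
    have hv1 : ‖v‖ = 1 := mem_sphere_zero_iff_norm.1 (htsub hv)
    have hsubS : ball (u + (3*r/4) • v) (r/16) ⊆ S := by
      intro w hw
      apply hballS
      rw [mem_ball, dist_eq_norm] at hw ⊢
      have : w - u = (w - (u + (3*r/4) • v)) + (3*r/4) • v := by abel
      rw [this]
      calc ‖(w - (u + (3*r/4) • v)) + (3*r/4) • v‖
          ≤ ‖w - (u + (3*r/4) • v)‖ + ‖(3*r/4) • v‖ := norm_add_le _ _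
        _ < r/16 + 3*r/4 := by
            have : ‖(3*r/4) • v‖ = 3*r/4 := by
              rw [norm_smul, Real.norm_eq_abs, abs_of_nonneg (by linarith), hv1, mul_one]
            rw [this]; linarith
        _ ≤ r := by linarith
    have hpos : 0 < μ (ball (u + (3*r/4) • v) (r/16)) := by
      apply support_pos hS isOpen_ball
      refine ⟨u + (3*r/4) • v, mem_ball_self (by linarith), hsubS (mem_ball_self (by linarith))⟩
    exact ENNReal.toReal_pos hpos.ne' (measure_ne_top μ _)
  have htne : t.Nonempty := by
    have : e ∈ ⋃ v ∈ t, ball v (1/16) := htcover (mem_sphere_zero_iff_norm.2 hunit)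
    rcases Set.mem_iUnion₂.1 this with ⟨v, hv, -⟩
    exact ⟨v, hv⟩
  set tf := htfin.toFinset with htf
  have htfne : tf.Nonempty := by
    rcases htne with ⟨v, hv⟩; exact ⟨v, htfin.mem_toFinset.2 hv⟩
  set b : ℝ := (tf.image f).min' (htfne.image f) with hb
  have hbpos : 0 < b := by
    rw [hb]
    rw [Finset.lt_min'_iff]
    intro y hy
    rcases Finset.mem_image.1 hy with ⟨v, hv, rfl⟩
    exact hballs v (htfin.mem_toFinset.1 hv)
  refine lt_of_lt_of_le hbpos (le_csInf ⟨_, e, inner ℝ e u, hunit, le_refl _, rfl⟩ ?_)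
  rintro r' ⟨v, c, hv1, hc, rfl⟩
  -- find a net point near v
  have hvmem : v ∈ ⋃ w ∈ t, ball w (1/16) := htcover (mem_sphere_zero_iff_norm.2 hv1)
  rcases Set.mem_iUnion₂.1 hvmem with ⟨vj, hvj, hvball⟩
  have hdist : ‖v - vj‖ ≤ 1/16 := by
    rw [mem_ball, dist_eq_norm] at hvball; linarith
  have hsub := halfspace_contains hr hv1 hdist hc (vj := vj)
  have : b ≤ f vj := Finset.min'_le _ _ (Finset.mem_image.2 ⟨vj, htfin.mem_toFinset.2 hvj, rfl⟩)
  refine this.trans ?_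
  rw [hf]
  exact ENNReal.toReal_mono (measure_ne_top μ _) (measure_mono hsub)

end Aux3

section Aux4
variable {d n : ℕ}

lemma ae_mem_S {μ : Measure (Euc d)} {S : Set (Euc d)} (hS : IsSupport μ S) :
    ∀ᵐ z ∂μ, z ∈ S := by
  rw [MeasureTheory.ae_iff]
  exact hS.2.1

lemma breaks_univ {μ : Measure (Euc d)} [IsProbabilityMeasure μ] {S : Set (Euc d)}
    (hS : IsSupport μ S) (hd : 0 < d)
    {x : Fin n → Euc d} {l : Fin n → ℝ} (hsum : ∑ i, l i = 1)
    {u : Euc d} (hu : u ∈ interior S) {Q : Euc d → Euc d} (hQ : IsOTMap μ S x l Q) :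
    Breaks μ S x l Q u Finset.univ := by
  intro δ hδ M
  set C : ℝ := 1 + ‖u‖ + ∑ i, ‖x i‖ with hC
  have hC1 : 1 ≤ C := by
    have : (0:ℝ) ≤ ‖u‖ + ∑ i, ‖x i‖ :=
      add_nonneg (norm_nonneg _) (Finset.sum_nonneg fun i _ => norm_nonneg _)
    linarith
  have hxC : ∀ i, ‖x i‖ ≤ C := by
    intro i
    have h1 : ‖x i‖ ≤ ∑ j, ‖x j‖ :=
      Finset.single_le_sum (fun j _ => norm_nonneg (x j)) (Finset.mem_univ i)
    have : (0:ℝ) ≤ ‖u‖ := norm_nonneg _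
    linarith
  set p : ℝ≥0∞ := μ (ball u δ) with hp
  have hp0 : 0 < p := support_pos hS isOpen_ball ⟨u, mem_ball_self hδ, interior_subset hu⟩
  have hpt : 0 < p.toReal := ENNReal.toReal_pos hp0.ne' (measure_ne_top μ _)
  set t : ℝ := C + (|M| + 1) / p.toReal with ht
  have htC : C ≤ t := by
    rw [ht]; exact le_add_of_nonneg_right (by positivity)
  have ht0 : 0 < t := lt_of_lt_of_le (by linarith) htC
  set e : Euc d := EuclideanSpace.single (⟨0, hd⟩ : Fin d) (1:ℝ) with he
  have hunit : ‖e‖ = 1 := by rw [he, EuclideanSpace.norm_single]; norm_num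
  set y : Euc d := t • e with hy
  have hyn : ‖y‖ = t := by
    rw [hy, norm_smul, Real.norm_eq_abs, abs_of_pos ht0, hunit, mul_one]
  refine ⟨1, fun _ => y, fun _ => 1, fun _ => y, fun _ => one_pos, by simp, ?_, ?_, ?_, ?_⟩
  · intro i hi; simp at hi
  · intro i hi; simp at hi
  · refine ⟨fun _ => 0, ?_, ?_⟩
    · intro i
      have hLag : Lag S (fun _ => y) (fun _ => 0) i = S := by
        ext z
        constructor
        · exact fun h => h.1
        · exact fun h => ⟨h, fun j => le_refl _⟩
      rw [hLag, measure_S_one hS, ENNReal.ofReal_one]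
    · filter_upwards [ae_mem_S hS] with z hz
      exact ⟨0, ⟨hz, fun j => le_refl _⟩, rfl⟩
  · -- the integral is large
    obtain ⟨w, hw, hae⟩ := hQ
    have hbound : ∀ᵐ z ∂μ, ENNReal.ofReal (t - C) ≤ (‖Q z - y‖₊ : ℝ≥0∞) := by
      filter_upwards [hae] with z hz
      obtain ⟨i, -, hQz⟩ := hz
      have h1 : ‖Q z - y‖ ≥ t - C := by
        have h2 : ‖Q z‖ ≤ C := hQz ▸ hxC i
        have := norm_sub_norm_le y (Q z)
        rw [← norm_neg (y - Q z), neg_sub] at this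
        linarith [hyn ▸ this]
      rw [← enorm_eq_nnnorm, ← ofReal_norm]
      exact ENNReal.ofReal_le_ofReal h1
    have step : ENNReal.ofReal (t - C) * p ≤ ∫⁻ z in ball u δ, (‖Q z - y‖₊ : ℝ≥0∞) ∂μ := by
      rw [← MeasureTheory.setLIntegral_const (ball u δ) (ENNReal.ofReal (t - C))]
      exact lintegral_mono_ae (ae_restrict_of_ae hbound)
    refine lt_of_lt_of_le ?_ step
    have hpeq : p = ENNReal.ofReal p.toReal := (ENNReal.ofReal_toReal (measure_ne_top μ _)).symm
    rw [hpeq, ← ENNReal.ofReal_mul (by linarith)]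
    have heq : (t - C) * p.toReal = |M| + 1 := by
      rw [ht]; field_simp; ring
    rw [heq]
    exact ENNReal.ofReal_lt_ofReal_iff (by positivity) |>.2
      (lt_of_le_of_lt (le_abs_self M) (by linarith))

end Aux4

section Aux5
variable {d n : ℕ}

open Classical in
lemma extract {μ : Measure (Euc d)} [IsProbabilityMeasure μ] {S : Set (Euc d)}
    (hS : IsSupport μ S) {x : Fin n → Euc d} {l : Fin n → ℝ} (hl : ∀ i, 0 < l i)
    (hsum : ∑ i, l i = 1) (hxinj : Function.Injective x)
    {Q : Euc d → Euc d} {u : Euc d} {I : Finset (Fin n)} {δ R C : ℝ} (hδ : 0 < δ)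
    (hQae : ∀ᵐ z ∂μ, ‖Q z‖ ≤ C)
    (hbr : Breaks μ S x l Q u I) :
    ∃ z ∈ ball u δ, ∃ y : Euc d, R ≤ ‖y‖ ∧
      μ {w : Euc d | ∀ i ∈ Iᶜ, 0 < (inner ℝ (w - z) (y - x i) : ℝ)}
        ≤ ENNReal.ofReal (∑ i ∈ I, l i) := by
  obtain ⟨m, x', l', Q', hl', hsum', -, hmeas, ⟨w', hw', hae'⟩, hint⟩ := hbr δ hδ (C + R)
  have hm : 0 < m := by
    rcases Nat.eq_zero_or_pos m with h | h
    · subst h; simp at hsum'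
    · exact h
  -- find a point of the ball sent far away by `Q'`
  have hz : ∃ z, z ∈ ball u δ ∧ (∃ j, z ∈ Lag S x' w' j ∧ Q' z = x' j) ∧ R ≤ ‖Q' z‖ := by
    by_contra hno
    push_neg at hno
    have hb : ∀ᵐ z ∂(μ.restrict (ball u δ)),
        (‖Q z - Q' z‖₊ : ℝ≥0∞) ≤ ENNReal.ofReal (C + R) := by
      filter_upwards [ae_restrict_of_ae hae', ae_restrict_of_ae hQae,
        ae_restrict_mem measurableSet_ball] with z h1 h2 h3
      have h4 : ‖Q' z‖ < R := hno z h3 h1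
      rw [← enorm_eq_nnnorm, ← ofReal_norm]
      apply ENNReal.ofReal_le_ofReal
      calc ‖Q z - Q' z‖ ≤ ‖Q z‖ + ‖Q' z‖ := norm_sub_le _ _
        _ ≤ C + R := by linarith
    have : ∫⁻ z in ball u δ, (‖Q z - Q' z‖₊ : ℝ≥0∞) ∂μ ≤ ENNReal.ofReal (C + R) := by
      calc ∫⁻ z in ball u δ, (‖Q z - Q' z‖₊ : ℝ≥0∞) ∂μ
          ≤ ∫⁻ _ in ball u δ, ENNReal.ofReal (C + R) ∂μ := lintegral_mono_ae hb
        _ = ENNReal.ofReal (C + R) * μ (ball u δ) := setLIntegral_const _ _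
        _ ≤ ENNReal.ofReal (C + R) * 1 := mul_le_mul_right prob_le_one _
        _ = ENNReal.ofReal (C + R) := mul_one _
    exact absurd hint (not_lt.2 this)
  obtain ⟨z, hzball, ⟨jy, hzLag, hQ'z⟩, hfar⟩ := hz
  refine ⟨z, hzball, Q' z, hfar, ?_⟩
  -- the measure estimate
  set JJ : Finset (Fin m) := Finset.univ.filter (fun j => ∃ i ∈ Iᶜ, x' j = x i) with hJJ
  have hsubset : {w : Euc d | ∀ i ∈ Iᶜ, 0 < (inner ℝ (w - z) (Q' z - x i) : ℝ)}
      ⊆ Sᶜ ∪ ⋃ j ∈ (JJᶜ : Finset (Fin m)), Lag S x' w' j := by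
    intro w hw
    by_cases hwS : w ∈ S
    · right
      rcases Set.mem_iUnion.1 (lag_cover S x' w' hm hwS) with ⟨j₀, hj₀⟩
      refine Set.mem_biUnion (Finset.mem_compl.2 fun hjJJ => ?_) hj₀
      obtain ⟨i, hiI, hxi⟩ := (Finset.mem_filter.1 hjJJ).2
      have hmono := lag_mono hzLag hj₀
      rw [hxi, ← hQ'z] at hmono
      have hwi := hw i hiI
      have : w - z = -(z - w) := by abel
      rw [this, inner_neg_left] at hwi
      linarith
    · exact Or.inl hwS
  have hsum_lower : ∑ i ∈ Iᶜ, l i ≤ ∑ j ∈ JJ, l' j := by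
    set B : Finset (Fin m) := Iᶜ.biUnion (fun i => Finset.univ.filter (fun j => x' j = x i))
      with hB
    have hBJJ : B ⊆ JJ := by
      intro j hj
      rcases Finset.mem_biUnion.1 hj with ⟨i, hi, hji⟩
      exact Finset.mem_filter.2 ⟨Finset.mem_univ _, i, hi, (Finset.mem_filter.1 hji).2⟩
    have hdisj : (↑(Iᶜ : Finset (Fin n)) : Set (Fin n)).PairwiseDisjoint
        (fun i => Finset.univ.filter (fun j => x' j = x i)) := by
      intro i _ i' _ hne
      apply Finset.disjoint_left.2
      intro j hj hj'
      exact hne (hxinj ((Finset.mem_filter.1 hj).2.symm.trans (Finset.mem_filter.1 hj').2))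
    have hBsum : ∑ j ∈ B, l' j = ∑ i ∈ Iᶜ, l i := by
      rw [hB, Finset.sum_biUnion hdisj]
      exact Finset.sum_congr rfl fun i hi =>
        discrete_singleton x' l' (fun j => (hl' j).le) (x i) (hl i).le (hmeas i hi)
    rw [← hBsum]
    exact Finset.sum_le_sum_of_subset_of_nonneg hBJJ fun j _ _ => (hl' j).le
  have hcompl_sum : ∑ j ∈ (JJᶜ : Finset (Fin m)), l' j ≤ ∑ i ∈ I, l i := by
    have h1 : ∑ j ∈ JJ, l' j + ∑ j ∈ JJᶜ, l' j = 1 := by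
      rw [Finset.sum_add_sum_compl]; exact hsum'
    have h2 : ∑ i ∈ I, l i + ∑ i ∈ Iᶜ, l i = 1 := by
      rw [Finset.sum_add_sum_compl]; exact hsum
    linarith
  calc μ {w : Euc d | ∀ i ∈ Iᶜ, 0 < (inner ℝ (w - z) (Q' z - x i) : ℝ)}
      ≤ μ (Sᶜ ∪ ⋃ j ∈ (JJᶜ : Finset (Fin m)), Lag S x' w' j) := measure_mono hsubset
    _ ≤ μ Sᶜ + μ (⋃ j ∈ (JJᶜ : Finset (Fin m)), Lag S x' w' j) := measure_union_le _ _
    _ ≤ 0 + ∑ j ∈ (JJᶜ : Finset (Fin m)), μ (Lag S x' w' j) := by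
        exact add_le_add (le_of_eq hS.2.1) (measure_biUnion_finset_le _ _)
    _ = ∑ j ∈ (JJᶜ : Finset (Fin m)), ENNReal.ofReal (l' j) := by
        rw [zero_add]; exact Finset.sum_congr rfl fun j _ => hw' j
    _ = ENNReal.ofReal (∑ j ∈ (JJᶜ : Finset (Fin m)), l' j) :=
        (ENNReal.ofReal_sum_of_nonneg fun j _ => (hl' j).le).symm
    _ ≤ ENNReal.ofReal (∑ i ∈ I, l i) := ENNReal.ofReal_le_ofReal hcompl_sum

end Aux5

section Aux6
variable {d n : ℕ}

set_option maxHeartbeats 2000000 in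
lemma depth_le_of_breaks {μ : Measure (Euc d)} [IsProbabilityMeasure μ] (hac : μ ≪ volume)
    {S : Set (Euc d)} (hS : IsSupport μ S)
    {x : Fin n → Euc d} {l : Fin n → ℝ} (hl : ∀ i, 0 < l i) (hsum : ∑ i, l i = 1)
    {u : Euc d} {Q : Euc d → Euc d} (hQ : IsOTMap μ S x l Q) {I : Finset (Fin n)}
    (hbr : Breaks μ S x l Q u I) :
    tukeyDepth μ u ≤ ∑ i ∈ I, l i := by
  classical
  set s : ℝ := ∑ i ∈ I, l i with hs
  by_contra hcon
  push_neg at hcon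
  set τ : ℝ := tukeyDepth μ u with hτ
  set ε : ℝ := (τ - s) / 2 with hε
  have hs0 : 0 ≤ s := Finset.sum_nonneg fun i _ => (hl i).le
  have hεpos : 0 < ε := by rw [hε]; linarith
  -- constants
  set C : ℝ := 1 + ‖u‖ + ∑ i, ‖x i‖ with hC
  have hC1 : 1 + ‖u‖ ≤ C := by
    have : (0:ℝ) ≤ ∑ i, ‖x i‖ := Finset.sum_nonneg fun i _ => norm_nonneg _
    linarith
  have hCpos : 0 < C := by have := norm_nonneg u; linarith
  have hxC : ∀ i, ‖x i‖ ≤ C := by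
    intro i
    have h1 : ‖x i‖ ≤ ∑ j, ‖x j‖ :=
      Finset.single_le_sum (fun j _ => norm_nonneg (x j)) (Finset.mem_univ i)
    have := norm_nonneg u
    linarith
  have huC : ‖u‖ ≤ C := by linarith
  obtain ⟨w₀, hw₀, hae₀⟩ := hQ
  have hxinj : Function.Injective x := adapted_inj hS hl hsum hw₀
  have hQae : ∀ᵐ z ∂μ, ‖Q z‖ ≤ C := by
    filter_upwards [hae₀] with z hz
    obtain ⟨i, -, hQz⟩ := hz
    rw [hQz]; exact hxC i
  -- tail bound
  obtain ⟨N, hN⟩ : ∃ N : ℕ, μ ((closedBall (0:Euc d) (N:ℝ))ᶜ) < ENNReal.ofReal ε := by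
    have h1 : Tendsto (fun q : ℕ => μ ((closedBall (0:Euc d) (q:ℝ))ᶜ)) atTop
        (𝓝 (μ (⋂ q : ℕ, (closedBall (0:Euc d) (q:ℝ))ᶜ))) := by
      apply tendsto_measure_iInter_atTop
      · exact fun q => measurableSet_closedBall.compl.nullMeasurableSet
      · intro q q' hqq'
        exact Set.compl_subset_compl.2 (closedBall_subset_closedBall (Nat.cast_le.2 hqq'))
      · exact ⟨0, measure_ne_top μ _⟩
    have h2 : (⋂ q : ℕ, (closedBall (0:Euc d) (q:ℝ))ᶜ) = ∅ := by
      ext p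
      simp only [Set.mem_iInter, Set.mem_compl_iff, mem_closedBall, dist_zero_right,
        Set.mem_empty_iff_false, iff_false, not_forall, not_not, not_le]
      obtain ⟨q, hq⟩ := exists_nat_ge ‖p‖
      exact ⟨q, by push_neg; exact hq⟩
    rw [h2, measure_empty] at h1
    exact (h1.eventually_lt_const (ENNReal.ofReal_pos.2 hεpos)).exists
  set T : ℝ := (N : ℝ) with hT
  have hT0 : 0 ≤ T := Nat.cast_nonneg N
  set K : ℝ := 1 + C + 2*C*(T+C) with hK
  have hK1 : 1 ≤ K := by nlinarith
  -- per-k extraction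
  have H : ∀ k : ℕ, ∃ z ∈ ball u (1/(k+1)), ∃ y : Euc d, (k+1) * K ≤ ‖y‖ ∧
      μ {w : Euc d | ∀ i ∈ Iᶜ, 0 < (inner ℝ (w - z) (y - x i) : ℝ)} ≤ ENNReal.ofReal s := by
    intro k
    exact extract hS hl hsum hxinj (by positivity) hQae hbr
  choose z hzball y hyfar hμX using H
  -- directions
  set v : ℕ → Euc d := fun k => ‖y k - u‖⁻¹ • (y k - u) with hv
  have hyu : ∀ k : ℕ, (k:ℝ) + 1 + 2*C*(T+C) ≤ ‖y k - u‖ := by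
    intro k
    have h1 : ((k:ℝ)+1) * K ≤ ‖y k‖ := hyfar k
    have h2 : ‖y k‖ - ‖u‖ ≤ ‖y k - u‖ := by
      have := norm_sub_norm_le (y k) u
      linarith [abs_le.1 (abs_norm_sub_norm_le (y k) u)]
    have h3 : ((k:ℝ)+1) * K = (k:ℝ)*K + K := by ring
    have h4 : (k:ℝ) ≤ (k:ℝ)*K := le_mul_of_one_le_right (Nat.cast_nonneg k) hK1
    rw [hK] at h3
    nlinarith [Nat.cast_nonneg (α := ℝ) k]
  have hyu0 : ∀ k : ℕ, 0 < ‖y k - u‖ := by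
    intro k
    have := hyu k
    nlinarith [Nat.cast_nonneg (α := ℝ) k]
  have hvnorm : ∀ k, ‖v k‖ = 1 := by
    intro k
    rw [hv]
    simp only [norm_smul, norm_inv, norm_norm]
    exact inv_mul_cancel₀ (hyu0 k).ne'
  have hsmul : ∀ k, y k - u = ‖y k - u‖ • v k := by
    intro k
    rw [hv, smul_smul, mul_inv_cancel₀ (hyu0 k).ne', one_smul]
  clear_value s τ ε C T K v
  -- the cap estimate
  have cap : ∀ β : ℝ, 0 < β → ∀ k : ℕ, 2/β ≤ (k:ℝ) → 4*C*(T+C)/β ≤ (k:ℝ) →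
      μ ({w : Euc d | β ≤ (inner ℝ (v k) (w - u) : ℝ)} ∩ closedBall 0 T)
        ≤ ENNReal.ofReal s := by
    intro β hβ k hk1 hk2
    refine le_trans (measure_mono ?_) (hμX k)
    rintro w ⟨hw1, hw2⟩
    rw [Set.mem_setOf_eq] at hw1
    rw [mem_closedBall, dist_zero_right] at hw2
    intro i hi
    -- bound each piece
    have hzk : ‖u - z k‖ ≤ 1/(k+1) := by
      have := mem_ball.1 (hzball k)
      rw [dist_comm, dist_eq_norm] at this
      exact this.le
    have hk0 : (0:ℝ) < k := lt_of_lt_of_le (by positivity) hk1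
    have hinv : 1/((k:ℝ)+1) ≤ β/2 := by
      rw [div_le_div_iff₀ (by linarith) (by linarith)]
      have : 2/β ≤ (k:ℝ) := hk1
      rw [div_le_iff₀ hβ] at this
      linarith
    have hA : β/2 ≤ (inner ℝ (w - z k) (v k) : ℝ) := by
      have hd1 : w - z k = (w - u) + (u - z k) := by abel
      rw [hd1, inner_add_left]
      have t1 : β ≤ (inner ℝ (w - u) (v k) : ℝ) := by
        rw [real_inner_comm]; exact hw1
      have t2 : -(1/((k:ℝ)+1)) ≤ (inner ℝ (u - z k) (v k) : ℝ) := by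
        have := abs_real_inner_le_norm (u - z k) (v k)
        rw [hvnorm k, mul_one] at this
        have := abs_le.1 this
        linarith [hzk]
      linarith
    have hB : -((T + C) * (2*C)) ≤ (inner ℝ (w - z k) (u - x i) : ℝ) := by
      have h1 : |(inner ℝ (w - z k) (u - x i) : ℝ)| ≤ ‖w - z k‖ * ‖u - x i‖ :=
        abs_real_inner_le_norm _ _
      have h2 : ‖w - z k‖ ≤ T + C := by
        have := norm_sub_le w (z k)
        have hz2 : ‖z k‖ ≤ C := by
          have h5 : ‖z k‖ ≤ ‖u‖ + ‖z k - u‖ := norm_le_norm_add_norm_sub' (z k) u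
          have h3 : ‖z k - u‖ ≤ 1/((k:ℝ)+1) := by
            rw [← norm_neg, neg_sub]; exact hzk
          have h4 : 1/((k:ℝ)+1) ≤ 1 := by
            rw [div_le_one (by linarith)]; linarith
          linarith
        calc ‖w - z k‖ ≤ ‖w‖ + ‖z k‖ := norm_sub_le _ _
          _ ≤ T + C := add_le_add hw2 hz2
      have h3 : ‖u - x i‖ ≤ 2*C := by
        calc ‖u - x i‖ ≤ ‖u‖ + ‖x i‖ := norm_sub_le _ _
          _ ≤ 2*C := by linarith [hxC i, huC]
      have h4 : ‖w - z k‖ * ‖u - x i‖ ≤ (T+C)*(2*C) := by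
        apply mul_le_mul h2 h3 (norm_nonneg _) (by linarith)
      linarith [abs_le.1 h1]
    have hsplit : (inner ℝ (w - z k) (y k - x i) : ℝ)
        = ‖y k - u‖ * (inner ℝ (w - z k) (v k) : ℝ) + (inner ℝ (w - z k) (u - x i) : ℝ) := by
      have hd2 : y k - x i = (y k - u) + (u - x i) := by abel
      have hyv : (inner ℝ (w - z k) (y k - u) : ℝ) = ‖y k - u‖ * (inner ℝ (w - z k) (v k) : ℝ) := by
        nth_rewrite 1 [hsmul k]
        rw [real_inner_smul_right]
      rw [hd2, inner_add_right, hyv]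
    rw [hsplit]
    have hkβ : 4*C*(T+C) ≤ (k:ℝ)*β := by
      rw [div_le_iff₀ hβ] at hk2; linarith
    have hmul : ((k:ℝ) + 1 + 2*C*(T+C)) * (β/2) ≤ ‖y k - u‖ * (inner ℝ (w - z k) (v k) : ℝ) := by
      apply mul_le_mul (hyu k) hA (by linarith) (norm_nonneg _)
    have hmul2 : ((k:ℝ)*β)/2 + β/2 + C*(T+C)*β ≤ ‖y k - u‖ * (inner ℝ (w - z k) (v k) : ℝ) := by
      calc ((k:ℝ)*β)/2 + β/2 + C*(T+C)*β = ((k:ℝ) + 1 + 2*C*(T+C)) * (β/2) := by ring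
        _ ≤ _ := hmul
    have e2 : (0:ℝ) ≤ C*(T+C)*β := by positivity
    linarith [hmul2, hB, hkβ, e2, hβ]
  -- extract a convergent subsequence of directions
  have hvmem : ∀ k, v k ∈ sphere (0:Euc d) 1 := fun k => mem_sphere_zero_iff_norm.2 (hvnorm k)
  obtain ⟨v₀, hv₀mem, φ, hφmono, hφconv⟩ := (isCompact_sphere (0:Euc d) 1).tendsto_subseq hvmem
  have hv₀1 : ‖v₀‖ = 1 := mem_sphere_zero_iff_norm.1 hv₀mem
  -- caps for the limiting direction
  have cap2 : ∀ β : ℝ, 0 < β →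
      μ ({w : Euc d | 2*β ≤ (inner ℝ v₀ (w - u) : ℝ)} ∩ closedBall 0 T)
        ≤ ENNReal.ofReal s := by
    intro β hβ
    have hTC1 : (0:ℝ) < T + C + 1 := by linarith
    obtain ⟨N₂, hN₂⟩ := exists_nat_ge (2/β + 4*C*(T+C)/β)
    obtain ⟨k, hkge, h1⟩ : ∃ k : ℕ, N₂ ≤ k ∧ dist ((v ∘ φ) k) v₀ < β/(T+C+1) :=
      ((eventually_ge_atTop N₂).and
        (hφconv.eventually (Metric.ball_mem_nhds v₀ (by positivity)))).exists
    rw [Function.comp_apply] at h1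
    have hφk : (k:ℝ) ≤ (φ k : ℝ) := Nat.cast_le.2 hφmono.le_apply
    have hN₂k : ((N₂:ℕ):ℝ) ≤ (k:ℝ) := Nat.cast_le.2 hkge
    have hq1 : 2/β ≤ ((φ k : ℕ):ℝ) := by
      have : (0:ℝ) ≤ 4*C*(T+C)/β := by positivity
      linarith
    have hq2 : 4*C*(T+C)/β ≤ ((φ k : ℕ):ℝ) := by
      have : (0:ℝ) < 2/β := by positivity
      linarith
    refine le_trans (measure_mono ?_) (cap β hβ (φ k) hq1 hq2)
    rintro w ⟨hw1, hw2⟩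
    rw [Set.mem_setOf_eq] at hw1
    refine ⟨?_, hw2⟩
    rw [Set.mem_setOf_eq]
    have hdiff : (inner ℝ (v (φ k)) (w - u) : ℝ)
        = (inner ℝ v₀ (w - u) : ℝ) + (inner ℝ (v (φ k) - v₀) (w - u) : ℝ) := by
      rw [← inner_add_left]; congr 1; abel
    have hwu : ‖w - u‖ ≤ T + C := by
      rw [mem_closedBall, dist_zero_right] at hw2
      calc ‖w - u‖ ≤ ‖w‖ + ‖u‖ := norm_sub_le _ _
        _ ≤ T + C := add_le_add hw2 huC
    have hcs : |(inner ℝ (v (φ k) - v₀) (w - u) : ℝ)| ≤ ‖v (φ k) - v₀‖ * ‖w - u‖ :=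
      abs_real_inner_le_norm _ _
    have hdist : ‖v (φ k) - v₀‖ ≤ β/(T+C+1) := by
      rw [← dist_eq_norm]; exact h1.le
    have hprod : ‖v (φ k) - v₀‖ * ‖w - u‖ ≤ (β/(T+C+1)) * (T+C) := by
      apply mul_le_mul hdist hwu (norm_nonneg _) (by positivity)
    have hfrac : (β/(T+C+1)) * (T+C) ≤ β := by
      rw [div_mul_eq_mul_div, div_le_iff₀ (by linarith)]
      nlinarith
    rw [hdiff]
    linarith [abs_le.1 hcs, hprod, hfrac]
  -- monotone union over shrinking caps
  set E : ℕ → Set (Euc d) := fun q =>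
    {w : Euc d | 2*(1/((q:ℝ)+1)) ≤ (inner ℝ v₀ (w - u) : ℝ)} ∩ closedBall 0 T with hE
  have hEmono : Monotone E := by
    intro q q' hqq'
    apply Set.inter_subset_inter_left
    intro w hw
    rw [Set.mem_setOf_eq] at hw ⊢
    have : 1/((q':ℝ)+1) ≤ 1/((q:ℝ)+1) := by
      apply one_div_le_one_div_of_le (by positivity)
      have : (q:ℝ) ≤ (q':ℝ) := Nat.cast_le.2 hqq'
      linarith
    linarith
  have hEbound : ∀ q, μ (E q) ≤ ENNReal.ofReal s := fun q => cap2 _ (by positivity)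
  have hEunion : {w : Euc d | 0 < (inner ℝ v₀ (w - u) : ℝ)} ∩ closedBall 0 T = ⋃ q, E q := by
    ext w
    simp only [Set.mem_iUnion, hE, Set.mem_inter_iff, Set.mem_setOf_eq]
    constructor
    · rintro ⟨hw1, hw2⟩
      obtain ⟨q, hq⟩ := exists_nat_ge (2 / (inner ℝ v₀ (w - u) : ℝ))
      refine ⟨q, ⟨?_, hw2⟩⟩
      rw [div_le_iff₀ hw1] at hq
      rw [mul_one_div, div_le_iff₀ (by positivity)]
      nlinarith
    · rintro ⟨q, hq1, hq2⟩
      refine ⟨lt_of_lt_of_le ?_ hq1, hq2⟩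
      positivity
  have hcap_open : μ ({w : Euc d | 0 < (inner ℝ v₀ (w - u) : ℝ)} ∩ closedBall 0 T)
      ≤ ENNReal.ofReal s := by
    rw [hEunion, hEmono.directed_le.measure_iUnion]
    exact iSup_le hEbound
  -- assemble the halfspace bound
  have hhalf : {z : Euc d | (inner ℝ v₀ u : ℝ) ≤ (inner ℝ v₀ z : ℝ)}
      ⊆ ({w : Euc d | 0 < (inner ℝ v₀ (w - u) : ℝ)} ∩ closedBall 0 T)
        ∪ ((closedBall (0:Euc d) T)ᶜ ∪ {w : Euc d | (inner ℝ v₀ (w - u) : ℝ) = 0}) := by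
    intro p hp
    rw [Set.mem_setOf_eq] at hp
    have h0 : 0 ≤ (inner ℝ v₀ (p - u) : ℝ) := by
      rw [inner_sub_right]; linarith
    rcases eq_or_lt_of_le h0 with h | h
    · exact Or.inr (Or.inr h.symm)
    · by_cases hpT : p ∈ closedBall (0:Euc d) T
      · exact Or.inl ⟨h, hpT⟩
      · exact Or.inr (Or.inl hpT)
  have hμhalf : μ {z : Euc d | (inner ℝ v₀ u : ℝ) ≤ (inner ℝ v₀ z : ℝ)}
      ≤ ENNReal.ofReal s + ENNReal.ofReal ε := by
    calc μ {z : Euc d | (inner ℝ v₀ u : ℝ) ≤ (inner ℝ v₀ z : ℝ)}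
        ≤ μ (({w : Euc d | 0 < (inner ℝ v₀ (w - u) : ℝ)} ∩ closedBall 0 T))
          + μ (((closedBall (0:Euc d) T)ᶜ ∪ {w : Euc d | (inner ℝ v₀ (w - u) : ℝ) = 0})) :=
          le_trans (measure_mono hhalf) (measure_union_le _ _)
      _ ≤ ENNReal.ofReal s + (μ ((closedBall (0:Euc d) T)ᶜ)
          + μ {w : Euc d | (inner ℝ v₀ (w - u) : ℝ) = 0}) := by
          exact add_le_add hcap_open (measure_union_le _ _)
      _ ≤ ENNReal.ofReal s + (ENNReal.ofReal ε + 0) := by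
          refine add_le_add (le_refl _) (add_le_add hN.le (le_of_eq ?_))
          exact hyperplane_null hac hv₀1 u
      _ = ENNReal.ofReal s + ENNReal.ofReal ε := by rw [add_zero]
  -- conclude
  have hτle : τ ≤ s + ε := by
    have h1 : τ ≤ (μ {z : Euc d | (inner ℝ v₀ u : ℝ) ≤ (inner ℝ v₀ z : ℝ)}).toReal := by
      rw [hτ]; exact tukey_le (μ := μ) (u := u) hv₀1
    have h2 : (μ {z : Euc d | (inner ℝ v₀ u : ℝ) ≤ (inner ℝ v₀ z : ℝ)}).toReal ≤ s + ε := by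
      have h3 : μ {z : Euc d | (inner ℝ v₀ u : ℝ) ≤ (inner ℝ v₀ z : ℝ)}
          ≤ ENNReal.ofReal (s + ε) := by
        rw [ENNReal.ofReal_add hs0 hεpos.le]; exact hμhalf
      have h4 := ENNReal.toReal_mono (by simp) h3
      rwa [ENNReal.toReal_ofReal (by linarith)] at h4
    exact le_trans h1 h2
  rw [hε] at hτle
  linarith
end Aux6


/-- **Lower bound for the breakdown point (Proposition 2).**
If the support `S` of `μ` is convex, then for every `u` in the interior of `S`,
`BDP(Q_ν(u)) ≥ min{∑_{i∈I} λ_i : ∅ ≠ I ⊆ {1,…,n}, ∑_{i∈I} λ_i ≥ HD(u,μ)}`. -/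
theorem bdp_ge_depth_min {d n : ℕ} (hd : 0 < d)
    (μ : Measure (Euc d)) [IsProbabilityMeasure μ] (hac : μ ≪ volume)
    (S : Set (Euc d)) (hS : IsSupport μ S) (hconv : Convex ℝ S)
    (x : Fin n → Euc d) (l : Fin n → ℝ) (hl : ∀ i, 0 < l i) (hsum : ∑ i, l i = 1)
    (u : Euc d) (hu : u ∈ interior S)
    (Q : Euc d → Euc d) (hQ : IsOTMap μ S x l Q) :
    sInf {s : ℝ | ∃ I : Finset (Fin n), I.Nonempty ∧
        tukeyDepth μ u ≤ ∑ i ∈ I, l i ∧ s = ∑ i ∈ I, l i}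
      ≤ BDP μ S x l Q u := by
  have hpos := depth_pos hS hd hu
  have key : ∀ I : Finset (Fin n), Breaks μ S x l Q u I →
      I.Nonempty ∧ tukeyDepth μ u ≤ ∑ i ∈ I, l i := by
    intro I hbr
    have hle := depth_le_of_breaks hac hS hl hsum hQ hbr
    refine ⟨?_, hle⟩
    rcases Finset.eq_empty_or_nonempty I with h | h
    · exfalso
      rw [h, Finset.sum_empty] at hle
      linarith
    · exact h
  rw [BDP]
  apply csInf_le_csInf
  · refine ⟨0, ?_⟩
    rintro r ⟨I, -, -, rfl⟩
    exact Finset.sum_nonneg fun i _ => (hl i).le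
  · exact ⟨∑ i, l i, Finset.univ, breaks_univ hS hd hsum hu hQ, rfl⟩
  · rintro r ⟨I, hbr, rfl⟩
    exact ⟨I, (key I hbr).1, (key I hbr).2, rfl⟩
end
end

section
/- Fix u in the interior of S and let v₀ be a unit vector such that μ(H_{u,v₀,0}) = HD(u,μ) (a minimal halfspace; such v₀ exists by absolute continuity of μ). Define the map s : S^{d−1} → ℝ ∪ {±∞} by s(v) = sup{s ∈ ℝ : μ(H_{u,v,s}) ≥ HD(u,μ)}. Then: (i) s takes values in ℝ; (ii) s is continuous on S^{d−1}; (iii) s(v) ≥ 0 for every v ∈ S^{d−1}; (iv) s(v₀) = 0. -/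
open MeasureTheory Metric Filter
open scoped ENNReal NNReal Topology Pointwise

noncomputable section

lemma mhg_closed {d : ℕ} (u v : Euc d) (s : ℝ) :
    IsClosed {z : Euc d | s ≤ (inner ℝ v (z - u) : ℝ)} :=
  isClosed_le continuous_const (Continuous.inner continuous_const (continuous_id.sub continuous_const))


lemma mhg_hyperplane_null {d : ℕ} {v : Euc d} (hv : v ≠ 0) (c : ℝ) :
    (volume : Measure (Euc d)) {z | (inner ℝ v z : ℝ) = c} = 0 := by
  set W : Submodule ℝ (Euc d) := LinearMap.ker ((innerSL ℝ v : Euc d →L[ℝ] ℝ) : Euc d →ₗ[ℝ] ℝ) with hW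
  have hWne : W ≠ ⊤ := by
    intro h
    have : (inner ℝ v v : ℝ) = 0 := by
      have : v ∈ W := h ▸ Submodule.mem_top
      simpa [hW, LinearMap.mem_ker] using this
    exact hv (inner_self_eq_zero.mp this)
  set z₀ : Euc d := (c / ‖v‖ ^ 2) • v with hz₀
  have hvz₀ : (inner ℝ v z₀ : ℝ) = c := by
    rw [hz₀, real_inner_smul_right, real_inner_self_eq_norm_sq]
    field_simp [hv]
  have hset : {z : Euc d | (inner ℝ v z : ℝ) = c} = (· + (-z₀)) ⁻¹' (W : Set (Euc d)) := by
    ext z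
    simp only [Set.mem_setOf_eq, Set.mem_preimage, SetLike.mem_coe, hW, LinearMap.mem_ker]
    constructor
    · intro h; simp [inner_add_right, inner_neg_right, h, hvz₀]
    · intro h
      have : (inner ℝ v (z + -z₀) : ℝ) = 0 := by simpa using h
      rw [inner_add_right, inner_neg_right, hvz₀] at this
      linarith
  rw [hset, measure_preimage_add_right]
  exact Measure.addHaar_submodule _ W hWne

lemma mhg_cont {d : ℕ} (μ : Measure (Euc d)) [IsProbabilityMeasure μ] (hac : μ ≪ volume)
    (u : Euc d) {v : Euc d} (hv : v ≠ 0) (s : ℝ) :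
    ContinuousAt (fun q : Euc d × ℝ =>
      (μ {z : Euc d | q.2 ≤ (inner ℝ q.1 (z - u) : ℝ)}).toReal) (v, s) := by
  have hmeas : ∀ q : Euc d × ℝ, MeasurableSet {z : Euc d | q.2 ≤ (inner ℝ q.1 (z - u) : ℝ)} :=
    fun q => (mhg_closed u q.1 q.2).measurableSet
  have hrw : ∀ q : Euc d × ℝ, (μ {z : Euc d | q.2 ≤ (inner ℝ q.1 (z - u) : ℝ)}).toReal
      = ∫ z, Set.indicator {z : Euc d | q.2 ≤ (inner ℝ q.1 (z - u) : ℝ)} 1 z ∂μ := by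
    intro q; rw [integral_indicator_one (hmeas q), measureReal_def]
  simp only [ContinuousAt, hrw]
  rw [← measureReal_def, ← integral_indicator_one ((mhg_closed u v s).measurableSet)]
  refine tendsto_integral_filter_of_dominated_convergence (l := 𝓝 (v, s)) (μ := μ)
    (F := fun (q : Euc d × ℝ) (z : Euc d) => Set.indicator {z : Euc d | q.2 ≤ (inner ℝ q.1 (z - u) : ℝ)} (1 : Euc d → ℝ) z)
    (f := fun (z : Euc d) => Set.indicator {z : Euc d | s ≤ (inner ℝ v (z - u) : ℝ)} (1 : Euc d → ℝ) z) (fun _ => 1) ?_ ?_ ?_ ?_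
  · exact Eventually.of_forall fun q =>
      ((measurable_const.indicator (hmeas q)).aestronglyMeasurable)
  · refine Eventually.of_forall fun q => ae_of_all _ fun z => ?_
    by_cases h : z ∈ {z : Euc d | q.2 ≤ (inner ℝ q.1 (z - u) : ℝ)}
    · rw [Set.indicator_of_mem h]; norm_num
    · rw [Set.indicator_of_notMem h]; norm_num
  · exact integrable_const 1
  · have hnull : μ {z : Euc d | (inner ℝ v (z - u) : ℝ) = s} = 0 := by
      apply hac
      have : {z : Euc d | (inner ℝ v (z - u) : ℝ) = s}
          ⊆ {z : Euc d | (inner ℝ v z : ℝ) = s + (inner ℝ v u : ℝ)} := by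
        intro z hz
        simp only [Set.mem_setOf_eq, inner_sub_right] at hz ⊢
        linarith
      exact measure_mono_null this (mhg_hyperplane_null hv _)
    filter_upwards [compl_mem_ae_iff.mpr hnull] with z hz
    simp only [Set.mem_compl_iff, Set.mem_setOf_eq] at hz
    rcases lt_or_gt_of_ne hz with h | h
    · -- inner v (z-u) < s : indicator eventually 0
      have hev : ∀ᶠ q : Euc d × ℝ in 𝓝 (v, s),
          Set.indicator {z : Euc d | q.2 ≤ (inner ℝ q.1 (z - u) : ℝ)} (1 : Euc d → ℝ) z = 0 := by
        have hc : Continuous fun q : Euc d × ℝ => (inner ℝ q.1 (z - u) : ℝ) - q.2 :=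
          (Continuous.inner continuous_fst continuous_const).sub continuous_snd
        have : ∀ᶠ q : Euc d × ℝ in 𝓝 (v, s), (inner ℝ q.1 (z - u) : ℝ) - q.2 < 0 :=
          hc.continuousAt.eventually_lt_const (show (inner ℝ v (z - u) : ℝ) - s < 0 by linarith)
        filter_upwards [this] with q hq
        exact Set.indicator_of_notMem (by simp only [Set.mem_setOf_eq]; linarith) _
      have h0 : Set.indicator {z' : Euc d | s ≤ (inner ℝ v (z' - u) : ℝ)} (1 : Euc d → ℝ) z = 0 :=
        Set.indicator_of_notMem (by simp only [Set.mem_setOf_eq]; linarith) _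
      rw [h0]
      exact tendsto_const_nhds.congr' (by filter_upwards [hev] with q hq using hq.symm)
    · have hev : ∀ᶠ q : Euc d × ℝ in 𝓝 (v, s),
          Set.indicator {z : Euc d | q.2 ≤ (inner ℝ q.1 (z - u) : ℝ)} (1 : Euc d → ℝ) z = 1 := by
        have hc : Continuous fun q : Euc d × ℝ => (inner ℝ q.1 (z - u) : ℝ) - q.2 :=
          (Continuous.inner continuous_fst continuous_const).sub continuous_snd
        have : ∀ᶠ q : Euc d × ℝ in 𝓝 (v, s), 0 < (inner ℝ q.1 (z - u) : ℝ) - q.2 :=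
          hc.continuousAt.eventually_const_lt (show (0:ℝ) < (inner ℝ v (z - u) : ℝ) - s by linarith)
        filter_upwards [this] with q hq
        exact Set.indicator_of_mem (by simp only [Set.mem_setOf_eq]; linarith) _
      have h1 : Set.indicator {z' : Euc d | s ≤ (inner ℝ v (z' - u) : ℝ)} (1 : Euc d → ℝ) z = 1 :=
        Set.indicator_of_mem (by simp only [Set.mem_setOf_eq]; linarith) _
      rw [h1]
      exact tendsto_const_nhds.congr' (by filter_upwards [hev] with q hq using hq.symm)

/-- **Properties of the map `v ↦ s(v)` (Lemma 1 of Section 3).**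
Let `u` be in the interior of the convex support `S` of the absolutely
continuous measure `μ`, and let `v₀` be a unit vector defining a minimal
halfspace at `u`, i.e. `μ(H_{u,v₀,0}) = HD(u,μ)`. Then the map
`s(v) = sup{s ∈ ℝ : μ(H_{u,v,s}) ≥ HD(u,μ)}` on the unit sphere (i) takes
values in `ℝ` (the defining set is nonempty and bounded above), (ii) is
continuous on the unit sphere, (iii) is nonnegative, and (iv) satisfies
`s(v₀) = 0`. -/
theorem minimal_halfspace_gauge {d : ℕ} (hd : 0 < d)
    (μ : Measure (Euc d)) [IsProbabilityMeasure μ] (hac : μ ≪ volume)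
    (S : Set (Euc d)) (hS : IsSupport μ S) (hconv : Convex ℝ S)
    (u : Euc d) (hu : u ∈ interior S)
    (v₀ : Euc d) (hv₀ : ‖v₀‖ = 1)
    (hmin : (μ {z : Euc d | (0 : ℝ) ≤ (inner ℝ v₀ (z - u) : ℝ)}).toReal = tukeyDepth μ u) :
    (∀ v : Euc d, ‖v‖ = 1 →
      ({s : ℝ | tukeyDepth μ u ≤
          (μ {z : Euc d | s ≤ (inner ℝ v (z - u) : ℝ)}).toReal}.Nonempty ∧
        BddAbove {s : ℝ | tukeyDepth μ u ≤
          (μ {z : Euc d | s ≤ (inner ℝ v (z - u) : ℝ)}).toReal})) ∧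
    ContinuousOn
      (fun v : Euc d => sSup {s : ℝ | tukeyDepth μ u ≤
        (μ {z : Euc d | s ≤ (inner ℝ v (z - u) : ℝ)}).toReal})
      (Metric.sphere (0 : Euc d) 1) ∧
    (∀ v : Euc d, ‖v‖ = 1 →
      0 ≤ sSup {s : ℝ | tukeyDepth μ u ≤
        (μ {z : Euc d | s ≤ (inner ℝ v (z - u) : ℝ)}).toReal}) ∧
    sSup {s : ℝ | tukeyDepth μ u ≤
      (μ {z : Euc d | s ≤ (inner ℝ v₀ (z - u) : ℝ)}).toReal} = 0 := by
  classical
  have hfin : ∀ A : Set (Euc d), μ A ≠ ⊤ := fun A => measure_ne_top μ A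
  set T : ℝ := tukeyDepth μ u with hT
  set P : Euc d → ℝ → ℝ :=
    fun v s => (μ {z : Euc d | s ≤ (inner ℝ v (z - u) : ℝ)}).toReal with hPdef
  set A : Euc d → Set ℝ := fun v => {s : ℝ | T ≤ P v s} with hAdef
  -- basic geometry of the support
  obtain ⟨r, hr0, hrball⟩ := Metric.isOpen_iff.mp isOpen_interior u hu
  have hrS : ball u r ⊆ S := hrball.trans interior_subset
  have hopenpos : ∀ U : Set (Euc d), IsOpen U → (U ∩ S).Nonempty → μ U ≠ 0 := by
    rintro U hU ⟨w, hwU, hwS⟩ h0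
    have hsub := hS.2.2 Uᶜ hU.isClosed_compl (by simpa using h0)
    exact hsub hwS hwU
  -- monotonicity of P in s
  have hPmono : ∀ (v : Euc d) (s₁ s₂ : ℝ), s₁ ≤ s₂ → P v s₂ ≤ P v s₁ := by
    intro v s₁ s₂ h
    exact ENNReal.toReal_mono (hfin _) (measure_mono fun z hz => le_trans h hz)
  -- T ≤ P v 0 for unit v
  have hTle0 : ∀ v : Euc d, ‖v‖ = 1 → T ≤ P v 0 := by
    intro v hv
    have hset : {z : Euc d | (0:ℝ) ≤ (inner ℝ v (z - u) : ℝ)}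
        = {z : Euc d | (inner ℝ v u : ℝ) ≤ (inner ℝ v z : ℝ)} := by
      ext z; simp only [Set.mem_setOf_eq, inner_sub_right, sub_nonneg]
    have hmem : P v 0 ∈ {r : ℝ | ∃ (v' : Euc d) (c : ℝ), ‖v'‖ = 1 ∧ c ≤ (inner ℝ v' u : ℝ) ∧
        r = (μ {z : Euc d | c ≤ (inner ℝ v' z : ℝ)}).toReal} :=
      ⟨v, (inner ℝ v u : ℝ), hv, le_refl _, by rw [hPdef]; simp only; rw [hset]⟩
    have hbdd : BddBelow {r : ℝ | ∃ (v' : Euc d) (c : ℝ), ‖v'‖ = 1 ∧ c ≤ (inner ℝ v' u : ℝ) ∧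
        r = (μ {z : Euc d | c ≤ (inner ℝ v' z : ℝ)}).toReal} := by
      refine ⟨0, ?_⟩
      rintro x ⟨v', c, -, -, rfl⟩
      exact ENNReal.toReal_nonneg
    exact csInf_le hbdd hmem
  -- T is positive
  have hT0 : 0 < T := by
    have hUopen : IsOpen {z : Euc d | (0:ℝ) < (inner ℝ v₀ (z - u) : ℝ)} :=
      isOpen_lt continuous_const
        (Continuous.inner continuous_const (continuous_id.sub continuous_const))
    have hptval : (inner ℝ v₀ ((u + (r/2) • v₀) - u) : ℝ) = r / 2 := by
      rw [add_sub_cancel_left, real_inner_smul_right, real_inner_self_eq_norm_sq, hv₀]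
      ring
    have hptS : u + (r/2) • v₀ ∈ S := by
      apply hrS
      rw [mem_ball, dist_eq_norm, add_sub_cancel_left, norm_smul, hv₀]
      simp only [mul_one, Real.norm_eq_abs]
      rw [abs_of_pos (by linarith)]
      linarith
    have hne : μ {z : Euc d | (0:ℝ) < (inner ℝ v₀ (z - u) : ℝ)} ≠ 0 :=
      hopenpos _ hUopen ⟨u + (r/2) • v₀, by simp only [Set.mem_setOf_eq, hptval]; linarith, hptS⟩
    have hsub : {z : Euc d | (0:ℝ) < (inner ℝ v₀ (z - u) : ℝ)}
        ⊆ {z : Euc d | (0:ℝ) ≤ (inner ℝ v₀ (z - u) : ℝ)} :=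
      Set.setOf_subset_setOf.mpr fun z => le_of_lt
    have : μ {z : Euc d | (0:ℝ) ≤ (inner ℝ v₀ (z - u) : ℝ)} ≠ 0 := by
      intro h; exact hne (measure_mono_null hsub h)
    rw [← hmin]
    exact ENNReal.toReal_pos this (hfin _)
  -- the slab lemma
  have hslab : ∀ v : Euc d, ‖v‖ = 1 → ∀ s₁ s₂ : ℝ, s₁ < s₂ → 0 ≤ s₂ →
      T ≤ P v s₂ → T < P v s₁ := by
    intro v hv s₁ s₂ h12 hs₂0 hTs₂
    -- find a point of S strictly inside the slab
    obtain ⟨w, hwS, hw1, hw2⟩ :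
        ∃ w : Euc d, w ∈ S ∧ s₁ < (inner ℝ v (w - u) : ℝ) ∧ (inner ℝ v (w - u) : ℝ) < s₂ := by
      rcases lt_or_ge s₁ 0 with hneg | hpos
      · -- take w = u - t v with small t > 0
        set t : ℝ := min (-s₁) r / 2 with ht
        have ht0 : 0 < t := by
          have : 0 < min (-s₁) r := lt_min (by linarith) hr0
          positivity
        have htr : t < r := by
          have : min (-s₁) r ≤ r := min_le_right _ _
          linarith
        have hts : t < -s₁ := by
          have : min (-s₁) r ≤ -s₁ := min_le_left _ _
          linarith
        refine ⟨u - t • v, hrS ?_, ?_, ?_⟩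
        · rw [mem_ball, dist_eq_norm]
          have : u - t • v - u = -(t • v) := by abel
          rw [this, norm_neg, norm_smul, hv, mul_one, Real.norm_eq_abs, abs_of_pos ht0]
          exact htr
        · have : u - t • v - u = -(t • v) := by abel
          rw [this, inner_neg_right, real_inner_smul_right, real_inner_self_eq_norm_sq, hv]
          simp only [one_pow, mul_one]
          linarith
        · have : u - t • v - u = -(t • v) := by abel
          rw [this, inner_neg_right, real_inner_smul_right, real_inner_self_eq_norm_sq, hv]
          simp only [one_pow, mul_one]
          linarith
      · -- 0 ≤ s₁ : use convexity towards a mass point beyond s₂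
        have hs₂pos : 0 < s₂ := lt_of_le_of_lt hpos h12
        have hμH : μ {z : Euc d | s₂ ≤ (inner ℝ v (z - u) : ℝ)} ≠ 0 := by
          intro h
          rw [hPdef] at hTs₂
          simp only [h, ENNReal.toReal_zero] at hTs₂
          linarith
        have hμHS : μ ({z : Euc d | s₂ ≤ (inner ℝ v (z - u) : ℝ)} ∩ S) ≠ 0 := by
          rwa [measure_inter_conull hS.2.1]
        obtain ⟨z, hzH, hzS⟩ := nonempty_of_measure_ne_zero hμHS
        have hzH' : s₂ ≤ (inner ℝ v (z - u) : ℝ) := hzH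
        have hc0 : (0:ℝ) < (inner ℝ v (z - u) : ℝ) := lt_of_lt_of_le hs₂pos hzH'
        set θ : ℝ := (s₁ + s₂) / (2 * (inner ℝ v (z - u) : ℝ)) with hθ
        have hsum : (0:ℝ) < s₁ + s₂ := by linarith
        have hθ0 : 0 < θ := div_pos hsum (by linarith)
        have hθ1 : θ ≤ 1 := by
          rw [hθ, div_le_one (by linarith)]
          linarith
        have hval : (inner ℝ v ((u + θ • (z - u)) - u) : ℝ) = (s₁ + s₂) / 2 := by
          rw [add_sub_cancel_left, real_inner_smul_right, hθ, div_mul_eq_mul_div,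
            mul_comm (2:ℝ) _, ← div_div, mul_div_cancel_right₀ _ hc0.ne']
        refine ⟨u + θ • (z - u), ?_, ?_, ?_⟩
        · have hrepr : u + θ • (z - u) = (1 - θ) • u + θ • z := by
            rw [sub_smul, one_smul, smul_sub]; abel
          rw [hrepr]
          exact hconv (interior_subset hu) hzS (by linarith) (le_of_lt hθ0) (by ring)
        · rw [hval]; linarith
        · rw [hval]; linarith
    -- open slab has positive measure
    have hcin : Continuous fun z : Euc d => (inner ℝ v (z - u) : ℝ) :=
      Continuous.inner continuous_const (continuous_id.sub continuous_const)
    have hUopen : IsOpen {z : Euc d |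
        s₁ < (inner ℝ v (z - u) : ℝ) ∧ (inner ℝ v (z - u) : ℝ) < s₂} := by
      rw [Set.setOf_and]
      exact (isOpen_lt continuous_const hcin).inter (isOpen_lt hcin continuous_const)
    have hUpos : μ {z : Euc d |
        s₁ < (inner ℝ v (z - u) : ℝ) ∧ (inner ℝ v (z - u) : ℝ) < s₂} ≠ 0 :=
      hopenpos _ hUopen ⟨w, ⟨hw1, hw2⟩, hwS⟩
    have hdisj : Disjoint {z : Euc d | s₂ ≤ (inner ℝ v (z - u) : ℝ)}
        {z : Euc d | s₁ < (inner ℝ v (z - u) : ℝ) ∧ (inner ℝ v (z - u) : ℝ) < s₂} := by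
      rw [Set.disjoint_left]
      rintro z hz ⟨-, h2⟩
      exact absurd hz (not_le.mpr h2)
    have hsub : {z : Euc d | s₂ ≤ (inner ℝ v (z - u) : ℝ)}
        ∪ {z : Euc d | s₁ < (inner ℝ v (z - u) : ℝ) ∧ (inner ℝ v (z - u) : ℝ) < s₂}
        ⊆ {z : Euc d | s₁ ≤ (inner ℝ v (z - u) : ℝ)} := by
      rintro z (hz | ⟨h1, -⟩)
      · exact le_trans (le_of_lt h12) hz
      · exact le_of_lt h1
    have hle : μ {z : Euc d | s₂ ≤ (inner ℝ v (z - u) : ℝ)}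
        + μ {z : Euc d | s₁ < (inner ℝ v (z - u) : ℝ) ∧ (inner ℝ v (z - u) : ℝ) < s₂}
        ≤ μ {z : Euc d | s₁ ≤ (inner ℝ v (z - u) : ℝ)} := by
      rw [← measure_union hdisj hUopen.measurableSet]
      exact measure_mono hsub
    have h2 := ENNReal.toReal_mono (hfin _) hle
    rw [ENNReal.toReal_add (hfin _) (hfin _)] at h2
    have h3 : 0 < (μ {z : Euc d |
        s₁ < (inner ℝ v (z - u) : ℝ) ∧ (inner ℝ v (z - u) : ℝ) < s₂}).toReal :=
      ENNReal.toReal_pos hUpos (hfin _)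
    have : T < P v s₂ + (μ {z : Euc d |
        s₁ < (inner ℝ v (z - u) : ℝ) ∧ (inner ℝ v (z - u) : ℝ) < s₂}).toReal := by linarith
    exact lt_of_lt_of_le this h2
  -- closedness / nonemptiness / boundedness of A v
  have hvne : ∀ v : Euc d, ‖v‖ = 1 → v ≠ 0 := by
    intro v hv h; rw [h, norm_zero] at hv; norm_num at hv
  have hPcontS : ∀ v : Euc d, v ≠ 0 → Continuous fun s => P v s := by
    intro v hv
    rw [continuous_iff_continuousAt]
    intro s
    exact (mhg_cont μ hac u hv s).comp
      ((continuous_const.prodMk continuous_id).continuousAt (x := s))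
  have hAclosed : ∀ v : Euc d, v ≠ 0 → IsClosed (A v) := by
    intro v hv
    exact isClosed_le continuous_const (hPcontS v hv)
  have hA0 : ∀ v : Euc d, ‖v‖ = 1 → (0:ℝ) ∈ A v := fun v hv => hTle0 v hv
  have hAbdd : ∀ v : Euc d, ‖v‖ = 1 → BddAbove (A v) := by
    intro v hv
    have hmeas : ∀ n : ℕ, NullMeasurableSet {z : Euc d | (n:ℝ) ≤ (inner ℝ v (z - u) : ℝ)} μ :=
      fun n => (mhg_closed u v _).measurableSet.nullMeasurableSet
    have hanti : Antitone fun n : ℕ => {z : Euc d | (n:ℝ) ≤ (inner ℝ v (z - u) : ℝ)} := by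
      intro m n hmn z hz
      have hz' : (n:ℝ) ≤ (inner ℝ v (z - u) : ℝ) := hz
      have hmn' : (m:ℝ) ≤ (n:ℝ) := Nat.cast_le.mpr hmn
      exact le_trans hmn' hz'
    have hint : ⋂ n : ℕ, {z : Euc d | (n:ℝ) ≤ (inner ℝ v (z - u) : ℝ)} = ∅ := by
      ext z
      simp only [Set.mem_iInter, Set.mem_setOf_eq, Set.mem_empty_iff_false, iff_false,
        not_forall, not_le]
      obtain ⟨n, hn⟩ := exists_nat_gt (inner ℝ v (z - u) : ℝ)
      exact ⟨n, hn⟩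
    have htend := tendsto_measure_iInter_atTop hmeas hanti ⟨0, hfin _⟩
    rw [hint, measure_empty] at htend
    have hev : ∀ᶠ n : ℕ in atTop,
        μ {z : Euc d | (n:ℝ) ≤ (inner ℝ v (z - u) : ℝ)} < ENNReal.ofReal T :=
      htend.eventually_lt_const (ENNReal.ofReal_pos.mpr hT0)
    obtain ⟨n, hn⟩ := hev.exists
    refine ⟨n, fun s hs => ?_⟩
    by_contra hcon
    push_neg at hcon
    have h1 : P v s ≤ (μ {z : Euc d | (n:ℝ) ≤ (inner ℝ v (z - u) : ℝ)}).toReal :=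
      ENNReal.toReal_mono (hfin _) (measure_mono fun z hz => le_trans (le_of_lt hcon) hz)
    have h2 : (μ {z : Euc d | (n:ℝ) ≤ (inner ℝ v (z - u) : ℝ)}).toReal < T :=
      (ENNReal.lt_ofReal_iff_toReal_lt (hfin _)).mp hn
    have hTs : T ≤ P v s := hs
    linarith
  have hAmem : ∀ v : Euc d, ‖v‖ = 1 → sSup (A v) ∈ A v := fun v hv =>
    (hAclosed v (hvne v hv)).csSup_mem ⟨0, hA0 v hv⟩ (hAbdd v hv)
  have hσ0 : ∀ v : Euc d, ‖v‖ = 1 → 0 ≤ sSup (A v) := fun v hv =>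
    le_csSup (hAbdd v hv) (hA0 v hv)
  have hgt : ∀ v : Euc d, ‖v‖ = 1 → ∀ s : ℝ, sSup (A v) < s → P v s < T := by
    intro v hv s hs
    by_contra h
    push_neg at h
    exact absurd (le_csSup (hAbdd v hv) (h : s ∈ A v)) (not_le.mpr hs)
  refine ⟨fun v hv => ⟨⟨0, hA0 v hv⟩, hAbdd v hv⟩, ?_, fun v hv => hσ0 v hv, ?_⟩
  · -- continuity on the sphere
    intro v hvmem
    have hv : ‖v‖ = 1 := by simpa using hvmem
    have hvn := hvne v hv
    rw [ContinuousWithinAt, Metric.tendsto_nhds]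
    intro ε hε
    have hcS : ∀ c : ℝ, ContinuousAt (fun v' : Euc d => P v' c) v := by
      intro c
      have hf : ContinuousAt (fun v' : Euc d => ((v', c) : Euc d × ℝ)) v :=
        (continuous_id.prodMk continuous_const).continuousAt
      exact ContinuousAt.comp (x := v)
        (f := fun v' : Euc d => ((v', c) : Euc d × ℝ))
        (g := fun q : Euc d × ℝ => (μ {z : Euc d | q.2 ≤ (inner ℝ q.1 (z - u) : ℝ)}).toReal)
        (mhg_cont μ hac u hvn c) hf
    have h1 : ∀ᶠ v' in 𝓝 v, P v' (sSup (A v) + ε/2) < T :=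
      (hcS _).eventually_lt_const (hgt v hv _ (by linarith))
    have h2 : ∀ᶠ v' in 𝓝 v, T < P v' (sSup (A v) - ε/2) :=
      (hcS _).eventually_const_lt
        (hslab v hv _ _ (by linarith) (hσ0 v hv) (hAmem v hv))
    filter_upwards [h1.filter_mono nhdsWithin_le_nhds, h2.filter_mono nhdsWithin_le_nhds,
      eventually_mem_nhdsWithin] with v' hv'1 hv'2 hv'mem
    have hv' : ‖v'‖ = 1 := by simpa using hv'mem
    have hup : sSup (A v') ≤ sSup (A v) + ε/2 := by
      apply csSup_le ⟨0, hA0 v' hv'⟩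
      intro s hs
      by_contra hcon
      push_neg at hcon
      have hm : P v' s ≤ P v' (sSup (A v) + ε/2) := hPmono v' _ _ (le_of_lt hcon)
      have hTs : T ≤ P v' s := hs
      linarith
    have hlo : sSup (A v) - ε/2 ≤ sSup (A v') :=
      le_csSup (hAbdd v' hv') (le_of_lt hv'2)
    rw [Real.dist_eq, abs_sub_lt_iff]
    constructor <;> linarith
  · -- s(v₀) = 0
    refine le_antisymm ?_ (hσ0 v₀ hv₀)
    apply csSup_le ⟨0, hA0 v₀ hv₀⟩
    intro s hs
    by_contra hcon
    push_neg at hcon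
    have hlt := hslab v₀ hv₀ 0 s hcon (le_of_lt hcon) hs
    have hP0 : P v₀ 0 = T := hmin
    linarith
end
end

section
/- Let μ be a finite Borel measure on ℝ^d with support S (the smallest closed set whose complement has μ-measure zero). Then the Tukey halfspace depth satisfies HD(u,μ) > 0 for every u in the interior of S. -/
open MeasureTheory Metric Filter
open scoped ENNReal NNReal Topology Pointwise

noncomputable section

/-- **Positivity of the halfspace depth in the interior of the support
(Lemma A.1).** If `μ` is a finite Borel measure on `ℝ^d` with support `S`, then
`HD(u,μ) > 0` for every `u` in the interior of `S`. -/
theorem tukeyDepth_pos_of_mem_interior_support {d : ℕ} (hd : 0 < d)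
    (μ : Measure (Euc d)) [IsFiniteMeasure μ]
    (S : Set (Euc d)) (hS : IsSupport μ S)
    (u : Euc d) (hu : u ∈ interior S) :
    0 < tukeyDepth μ u := by
  obtain ⟨hSclosed, hSnull, hSmin⟩ := hS
  -- balls centered at points of S have positive measure
  have hball : ∀ y ∈ S, ∀ r : ℝ, 0 < r → 0 < μ (ball y r) := by
    intro y hy r hr
    by_contra h
    push_neg at h
    have h0 : μ (ball y r) = 0 := le_antisymm h zero_le
    have hF : IsClosed (S \ ball y r) := hSclosed.sdiff isOpen_ball
    have hsub : (S \ ball y r)ᶜ ⊆ Sᶜ ∪ ball y r := by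
      intro z hz
      by_cases hzS : z ∈ S
      · right; by_contra hzb; exact hz ⟨hzS, hzb⟩
      · left; exact hzS
    have hFc : μ (S \ ball y r)ᶜ = 0 :=
      measure_mono_null hsub (measure_union_null hSnull h0)
    have := hSmin _ hF hFc hy
    exact this.2 (mem_ball_self hr)
  obtain ⟨ε, hε, hball_sub⟩ := Metric.isOpen_iff.mp isOpen_interior u hu
  have hεS : ball u ε ⊆ S := hball_sub.trans interior_subset
  -- a unit vector
  set i0 : Fin d := ⟨0, hd⟩
  set v0 : Euc d := EuclideanSpace.single i0 (1 : ℝ) with hv0def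
  have hv0 : ‖v0‖ = 1 := by
    rw [hv0def, EuclideanSpace.norm_single]; norm_num
  haveI : Nontrivial (Euc d) := ⟨⟨v0, 0, by
    intro h
    rw [h] at hv0
    simp at hv0⟩⟩
  -- compact sphere and finite subcover
  have hK : IsCompact (sphere u (ε / 3)) := isCompact_sphere u (ε / 3)
  obtain ⟨t, hts, hcov⟩ := hK.elim_nhds_subcover (fun y => ball y (ε / 6))
    (fun y _ => ball_mem_nhds y (by positivity))
  have hKne : (sphere u (ε / 3)).Nonempty :=
    NormedSpace.sphere_nonempty.mpr (by positivity)
  obtain ⟨y0, hy0⟩ := hKne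
  have ht : t.Nonempty := by
    have := hcov hy0
    simp only [Set.mem_iUnion] at this
    obtain ⟨y, hy, _⟩ := this
    exact ⟨y, hy⟩
  -- the sphere is inside S
  have hsphS : ∀ y ∈ sphere u (ε / 3), y ∈ S := by
    intro y hy
    apply hεS
    rw [mem_ball, dist_comm]
    rw [mem_sphere] at hy
    rw [dist_comm] at hy
    rw [hy]; linarith
  -- minimal measure of the small balls
  set m : ℝ≥0∞ := t.inf' ht (fun y => μ (ball y (ε / 6))) with hmdef
  have hmpos : 0 < m := by
    rw [hmdef, Finset.lt_inf'_iff]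
    intro y hy
    exact hball y (hsphS y (hts y hy)) _ (by positivity)
  have hmtop : m ≠ ⊤ := by
    obtain ⟨y, hy⟩ := ht
    exact ne_top_of_le_ne_top (measure_ne_top μ _)
      (Finset.inf'_le _ hy)
  have hmR : 0 < m.toReal := ENNReal.toReal_pos hmpos.ne' hmtop
  have hne : {r : ℝ | ∃ (v : Euc d) (c : ℝ), ‖v‖ = 1 ∧ c ≤ (inner ℝ v u : ℝ) ∧
      r = (μ {z : Euc d | c ≤ (inner ℝ v z : ℝ)}).toReal}.Nonempty :=
    ⟨_, v0, (inner ℝ v0 u : ℝ), hv0, le_refl _, rfl⟩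
  have hbound : ∀ r ∈ {r : ℝ | ∃ (v : Euc d) (c : ℝ), ‖v‖ = 1 ∧ c ≤ (inner ℝ v u : ℝ) ∧
      r = (μ {z : Euc d | c ≤ (inner ℝ v z : ℝ)}).toReal}, m.toReal ≤ r := by
    rintro r ⟨v, c, hv, hc, rfl⟩
    set yv : Euc d := u + (ε / 3) • v with hyvdef
    have hyvK : yv ∈ sphere u (ε / 3) := by
      rw [mem_sphere, hyvdef, dist_eq_norm]
      simp only [add_sub_cancel_left]
      rw [norm_smul, hv]
      simp [abs_of_pos, hε]
    have := hcov hyvK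
    simp only [Set.mem_iUnion] at this
    obtain ⟨y, hyt, hyv⟩ := this
    -- ball y (ε/6) is contained in the halfspace
    have hsub : ball y (ε / 6) ⊆ {z : Euc d | c ≤ (inner ℝ v z : ℝ)} := by
      intro z hz
      have hdz : ‖z - yv‖ < ε / 3 := by
        calc ‖z - yv‖ ≤ ‖z - y‖ + ‖y - yv‖ := norm_sub_le_norm_sub_add_norm_sub z y yv
        _ < ε / 6 + ε / 6 := by
            apply add_lt_add
            · rw [← dist_eq_norm]; exact hz
            · rw [← dist_eq_norm, dist_comm]; exact hyv
        _ = ε / 3 := by ring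
      have hinner_yv : (inner ℝ v yv : ℝ) = (inner ℝ v u : ℝ) + ε / 3 := by
        rw [hyvdef, inner_add_right, real_inner_smul_right,
          real_inner_self_eq_norm_sq, hv]
        ring
      have hCS : -(‖z - yv‖) ≤ (inner ℝ v (z - yv) : ℝ) := by
        have h1 : |(inner ℝ v (z - yv) : ℝ)| ≤ ‖v‖ * ‖z - yv‖ := abs_real_inner_le_norm v (z - yv)
        rw [hv, one_mul] at h1
        linarith [neg_abs_le ((inner ℝ v (z - yv) : ℝ))]
      have : (inner ℝ v z : ℝ) = (inner ℝ v yv : ℝ) + (inner ℝ v (z - yv) : ℝ) := by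
        rw [← inner_add_right]; congr 1; abel
      have hzge : c ≤ (inner ℝ v z : ℝ) := by
        rw [this, hinner_yv]
        have : -(ε / 3) ≤ (inner ℝ v (z - yv) : ℝ) := le_trans (by linarith) hCS
        linarith
      exact hzge
    have hle : m ≤ μ {z : Euc d | c ≤ (inner ℝ v z : ℝ)} :=
      le_trans (Finset.inf'_le _ hyt) (measure_mono hsub)
    exact ENNReal.toReal_le_toReal hmtop (measure_ne_top μ _) |>.mpr hle
  calc (0 : ℝ) < m.toReal := hmR
    _ ≤ tukeyDepth μ u := le_csInf hne hbound
end
end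

section
/- Let S be a convex subset of ℝ^d and let μ be a Borel probability measure on ℝ^d, absolutely continuous with respect to the Lebesgue measure, whose support is S. Fix u ∈ S. Then the maximal μ-measure achievable by a convex subset of S that does not contain u is 1 − HD(u,μ): every convex set D ⊆ S with u ∉ D satisfies μ(D) ≤ 1 − HD(u,μ), and there exists a convex set D ⊆ S with u ∉ D and μ(D) = 1 − HD(u,μ). -/
open MeasureTheory Metric Filter
open scoped ENNReal NNReal Topology Pointwise

noncomputable section

open scoped RealInnerProductSpace

namespace MyAux


variable {d : ℕ}

lemma continuous_inner_left (v : Euc d) : Continuous fun z : Euc d => ⟪v, z⟫ :=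
  continuous_const.inner continuous_id

lemma hyperplane_volume (v : Euc d) (hv : v ≠ 0) (c : ℝ) :
    volume {z : Euc d | ⟪v, z⟫ = c} = 0 := by
  set K : Submodule ℝ (Euc d) := LinearMap.ker (((innerSL ℝ v : Euc d →L[ℝ] ℝ) : Euc d →ₗ[ℝ] ℝ)) with hK
  have hKmem : ∀ z : Euc d, z ∈ K ↔ ⟪v, z⟫ = 0 := by
    intro z
    simp [hK, LinearMap.mem_ker]
  have hKne : K ≠ ⊤ := by
    intro h
    have hvK : v ∈ K := h ▸ Submodule.mem_top
    rw [hKmem, real_inner_self_eq_norm_sq] at hvK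
    exact hv (by simpa using norm_eq_zero.mp (by nlinarith [norm_nonneg v]))
  have hnv : (‖v‖ : ℝ) ^ 2 ≠ 0 := by
    simpa using fun h => hv (norm_eq_zero.mp h)
  set p : Euc d := (c / ‖v‖ ^ 2) • v with hp
  have hvp : ⟪v, p⟫ = c := by
    rw [hp, real_inner_smul_right, real_inner_self_eq_norm_sq]
    field_simp
  have hset : {z : Euc d | ⟪v, z⟫ = c} = (fun z => z + (-p)) ⁻¹' (K : Set (Euc d)) := by
    ext z
    simp only [Set.mem_setOf_eq, Set.mem_preimage, SetLike.mem_coe, hKmem]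
    rw [← sub_eq_add_neg, inner_sub_right, hvp, sub_eq_zero]
  rw [hset, measure_preimage_add_right]
  exact Measure.addHaar_submodule volume K hKne

lemma measure_halfspace_eq (μ : Measure (Euc d)) (hac : μ ≪ volume) {v : Euc d}
    (hv : v ≠ 0) (c : ℝ) :
    μ {z : Euc d | c ≤ ⟪v, z⟫} = μ {z : Euc d | c < ⟪v, z⟫} := by
  have hnull : μ {z : Euc d | ⟪v, z⟫ = c} = 0 := hac (hyperplane_volume v hv c)
  have hsplit : {z : Euc d | c ≤ ⟪v, z⟫} = {z : Euc d | c < ⟪v, z⟫} ∪ {z : Euc d | ⟪v, z⟫ = c} := by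
    ext z
    simp only [Set.mem_setOf_eq, Set.mem_union]
    constructor
    · intro h
      rcases lt_or_eq_of_le h with h | h
      exacts [Or.inl h, Or.inr h.symm]
    · rintro (h | h)
      exacts [le_of_lt h, h.ge]
  refine le_antisymm ?_ (measure_mono fun z hz => le_of_lt (Set.mem_setOf_eq ▸ hz))
  rw [hsplit]
  refine (measure_union_le _ _).trans ?_
  rw [hnull, add_zero]


lemma interior_closure_subset {D : Set (Euc d)} (hD : Convex ℝ D) :
    interior (closure D) ⊆ D := by
  intro u hu
  have hne : (interior (closure D)).Nonempty := ⟨u, hu⟩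
  have hspan : affineSpan ℝ (closure D) = ⊤ :=
    (hD.closure.interior_nonempty_iff_affineSpan_eq_top).mp hne
  have hspanD : affineSpan ℝ D = ⊤ := by
    have h1 : closure D ⊆ (affineSpan ℝ D : Set (Euc d)) :=
      closure_minimal (subset_affineSpan ℝ D) (affineSpan ℝ D).closed_of_finiteDimensional
    have h2 : affineSpan ℝ (closure D) ≤ affineSpan ℝ ((affineSpan ℝ D : Set (Euc d))) :=
      affineSpan_mono ℝ h1
    rw [AffineSubspace.affineSpan_coe] at h2
    exact top_le_iff.mp (hspan ▸ h2)
  obtain ⟨x, hx⟩ : (interior D).Nonempty :=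
    hD.interior_nonempty_iff_affineSpan_eq_top.mpr hspanD
  -- find small t > 0 with u + t • (u - x) ∈ interior (closure D)
  have hcont : Continuous fun t : ℝ => u + t • (u - x) := by continuity
  have htend : Tendsto (fun t : ℝ => u + t • (u - x)) (𝓝 0) (𝓝 u) := by
    have := hcont.tendsto 0
    simpa using this
  have hev : ∀ᶠ t : ℝ in 𝓝 0, u + t • (u - x) ∈ interior (closure D) :=
    htend.eventually_mem (isOpen_interior.mem_nhds hu)
  have hev2 : ∀ᶠ t : ℝ in 𝓝[>] (0:ℝ), u + t • (u - x) ∈ interior (closure D) :=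
    hev.filter_mono nhdsWithin_le_nhds
  obtain ⟨t, ht_mem, ht_pos⟩ := (hev2.and eventually_mem_nhdsWithin).exists
  rw [Set.mem_Ioi] at ht_pos
  have h1t : (0:ℝ) < 1 + t := by linarith
  have hyc : u + t • (u - x) ∈ closure D := interior_subset ht_mem
  have hseg : openSegment ℝ x (u + t • (u - x)) ⊆ interior D :=
    hD.openSegment_interior_closure_subset_interior hx hyc
  have humem : u ∈ openSegment ℝ x (u + t • (u - x)) := by
    refine ⟨t / (1 + t), 1 / (1 + t), div_pos ht_pos h1t, by positivity, ?_, ?_⟩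
    · field_simp; ring
    · match_scalars <;> (field_simp; try ring)
  exact interior_subset (hseg humem)

lemma exists_sep (hd : 0 < d) {D : Set (Euc d)} (hD : Convex ℝ D) (u : Euc d) (hu : u ∉ D) :
    ∃ v : Euc d, ‖v‖ = 1 ∧ ∀ z ∈ D, ⟪v, z⟫ ≤ ⟪v, u⟫ := by
  suffices h : ∃ v0 : Euc d, v0 ≠ 0 ∧ ∀ z ∈ D, ⟪v0, z⟫ ≤ ⟪v0, u⟫ by
    obtain ⟨v0, hv0, hsep⟩ := h
    have hn : (0:ℝ) < ‖v0‖ := norm_pos_iff.mpr hv0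
    refine ⟨‖v0‖⁻¹ • v0, ?_, fun z hz => ?_⟩
    · rw [norm_smul, norm_inv, norm_norm]
      field_simp
    · rw [real_inner_smul_left, real_inner_smul_left]
      exact mul_le_mul_of_nonneg_left (hsep z hz) (inv_nonneg.mpr hn.le)
  rcases Set.eq_empty_or_nonempty D with hDe | ⟨z₀, hz₀⟩
  · refine ⟨EuclideanSpace.single (⟨0, hd⟩ : Fin d) (1:ℝ), ?_, by simp [hDe]⟩
    intro h
    have := congrArg norm h
    rw [EuclideanSpace.norm_single, norm_zero] at this
    simpa using this
  rcases Set.eq_empty_or_nonempty (interior (closure D)) with hie | ⟨x₀, hx₀⟩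
  · -- D has empty interior of closure: lies in a proper affine subspace
    have hspan : affineSpan ℝ D ≠ ⊤ := by
      intro h
      have h2 : affineSpan ℝ (closure D) = ⊤ :=
        top_le_iff.mp (h ▸ affineSpan_mono ℝ subset_closure)
      have := (hD.closure.interior_nonempty_iff_affineSpan_eq_top).mpr h2
      rw [hie] at this
      exact Set.not_nonempty_empty this
    set W := (affineSpan ℝ D).direction with hW
    have hWne : W ≠ ⊤ := by
      intro h
      exact hspan ((AffineSubspace.direction_eq_top_iff_of_nonempty
        ⟨z₀, subset_affineSpan ℝ D hz₀⟩).mp h)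
    have hWbot : Wᗮ ≠ ⊥ := by
      rwa [Ne, Submodule.orthogonal_eq_bot_iff]
    obtain ⟨v1, hv1W, hv1⟩ := Submodule.exists_mem_ne_zero_of_ne_bot hWbot
    have hconst : ∀ z ∈ D, ⟪v1, z⟫ = ⟪v1, z₀⟫ := by
      intro z hz
      have hmem : z - z₀ ∈ W := by
        have := AffineSubspace.vsub_mem_direction
          (subset_affineSpan ℝ D hz) (subset_affineSpan ℝ D hz₀)
        simpa [vsub_eq_sub] using this
      have h0 : ⟪v1, z - z₀⟫ = 0 := Submodule.inner_left_of_mem_orthogonal hmem hv1W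
      rw [inner_sub_right] at h0
      linarith
    by_cases hcmp : ⟪v1, z₀⟫ ≤ ⟪v1, u⟫
    · exact ⟨v1, hv1, fun z hz => (hconst z hz) ▸ hcmp⟩
    · refine ⟨-v1, neg_ne_zero.mpr hv1, fun z hz => ?_⟩
      rw [inner_neg_left, inner_neg_left]
      have := hconst z hz
      push_neg at hcmp
      linarith
  · -- nonempty interior of closure
    have hu' : u ∉ interior (closure D) := fun h => hu (interior_closure_subset hD h)
    obtain ⟨f, hf⟩ := geometric_hahn_banach_open_point (hD.closure.interior)
      isOpen_interior hu'
    set v1 : Euc d := (InnerProductSpace.toDual ℝ (Euc d)).symm f with hv1def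
    have hv1app : ∀ z : Euc d, ⟪v1, z⟫ = f z := fun z =>
      InnerProductSpace.toDual_symm_apply
    have hx0lt : ⟪v1, x₀⟫ < ⟪v1, u⟫ := by
      rw [hv1app, hv1app]; exact hf x₀ hx₀
    refine ⟨v1, ?_, ?_⟩
    · intro h
      rw [h] at hx0lt
      simp at hx0lt
    · intro z hz
      -- z ∈ closure D = closure of segment endpoints; use openSegment x₀ z ⊆ interior (closure D)
      have hseg : openSegment ℝ x₀ z ⊆ interior (closure D) :=
        hD.closure.openSegment_interior_closure_subset_interior hx₀
          (subset_closure (subset_closure hz))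
      have hsub : openSegment ℝ x₀ z ⊆ {w : Euc d | f w ≤ f u} :=
        fun w hw => le_of_lt (hf w (hseg hw))
      have hzc : z ∈ closure (openSegment ℝ x₀ z) := by
        rw [closure_openSegment]
        exact right_mem_segment ℝ x₀ z
      have hclosed : IsClosed {w : Euc d | f w ≤ f u} :=
        isClosed_le f.continuous continuous_const
      have := (closure_minimal hsub hclosed) hzc
      rw [hv1app, hv1app]
      exact this


lemma exists_min (hd : 0 < d) (μ : Measure (Euc d)) [IsProbabilityMeasure μ]
    (hac : μ ≪ volume) (u : Euc d) :
    ∃ v : Euc d, ‖v‖ = 1 ∧ ∀ w : Euc d, ‖w‖ = 1 →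
      μ {z : Euc d | ⟪v, u⟫ ≤ ⟪v, z⟫} ≤ μ {z : Euc d | ⟪w, u⟫ ≤ ⟪w, z⟫} := by
  classical
  set f : Euc d → ℝ≥0∞ := fun v => μ {z : Euc d | ⟪v, u⟫ ≤ ⟪v, z⟫} with hfdef
  set sph : Set (Euc d) := Metric.sphere 0 1 with hsph
  have hsph_ne : sph.Nonempty := by
    refine ⟨EuclideanSpace.single (⟨0, hd⟩ : Fin d) (1:ℝ), ?_⟩
    rw [hsph, mem_sphere_zero_iff_norm, EuclideanSpace.norm_single]
    simp
  have hS_ne : (f '' sph).Nonempty := hsph_ne.image f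
  obtain ⟨t, -, ht_tendsto, ht_mem⟩ := exists_seq_tendsto_sInf hS_ne (OrderBot.bddBelow _)
  choose w hw_mem hw_eq using fun n => ht_mem n
  obtain ⟨v, hv_mem, φ, hφ_mono, hφ_tendsto⟩ := (isCompact_sphere (0 : Euc d) 1).tendsto_subseq hw_mem
  have hvnorm : ‖v‖ = 1 := mem_sphere_zero_iff_norm.mp hv_mem
  have hvne : v ≠ 0 := fun h => by rw [h, norm_zero] at hvnorm; exact one_ne_zero hvnorm.symm
  refine ⟨v, hvnorm, fun w' hw' => ?_⟩
  have hle : f v ≤ sInf (f '' sph) := by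
    have h_open : f v = μ {z : Euc d | ⟪v, u⟫ < ⟪v, z⟫} := by
      rw [hfdef]
      exact measure_halfspace_eq μ hac hvne _
    set T : ℕ → Set (Euc d) :=
      fun n => ⋂ k ∈ Set.Ici n, {z : Euc d | ⟪w (φ k), u⟫ ≤ ⟪w (φ k), z⟫} with hT
    have hT_mono : Monotone T := by
      intro a b hab
      exact Set.biInter_subset_biInter_left (Set.Ici_subset_Ici.mpr hab)
    have hsub : {z : Euc d | ⟪v, u⟫ < ⟪v, z⟫} ⊆ ⋃ n, T n := by
      intro z hz
      have hpos : (0:ℝ) < ⟪v, z - u⟫ := by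
        rw [inner_sub_right]
        exact sub_pos.mpr hz
      have htt : Tendsto (fun k => ⟪w (φ k), z - u⟫) atTop (𝓝 ⟪v, z - u⟫) := by
        have hc : Continuous fun y : Euc d => ⟪y, z - u⟫ :=
          continuous_id.inner continuous_const
        exact (hc.tendsto v).comp hφ_tendsto
      have hev : ∀ᶠ k in atTop, (0:ℝ) < ⟪w (φ k), z - u⟫ :=
        htt.eventually (eventually_gt_nhds hpos)
      obtain ⟨n, hn⟩ := eventually_atTop.mp hev
      refine Set.mem_iUnion.mpr ⟨n, ?_⟩
      refine Set.mem_biInter fun k hk => ?_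
      have := hn k hk
      rw [inner_sub_right] at this
      exact le_of_lt (sub_pos.mp this)
    have htφ : Tendsto (t ∘ φ) atTop (𝓝 (sInf (f '' sph))) :=
      ht_tendsto.comp hφ_mono.tendsto_atTop
    calc f v = μ {z : Euc d | ⟪v, u⟫ < ⟪v, z⟫} := h_open
      _ ≤ μ (⋃ n, T n) := measure_mono hsub
      _ = ⨆ n, μ (T n) := hT_mono.measure_iUnion
      _ ≤ sInf (f '' sph) := by
          refine iSup_le fun n => ?_
          refine ge_of_tendsto htφ (eventually_atTop.mpr ⟨n, fun k hk => ?_⟩)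
          have hTs : T n ⊆ {z : Euc d | ⟪w (φ k), u⟫ ≤ ⟪w (φ k), z⟫} :=
            Set.biInter_subset_of_mem hk
          calc μ (T n) ≤ f (w (φ k)) := measure_mono hTs
            _ = (t ∘ φ) k := hw_eq (φ k)
  exact hle.trans (csInf_le (OrderBot.bddBelow _) ⟨w', hsph ▸ mem_sphere_zero_iff_norm.mpr hw', rfl⟩)

end MyAux

open MyAux in
/-- **Maximal measure of convex subsets avoiding a point (Lemma A.5).**
Let `S` be a convex set and `μ` an absolutely continuous probability measure
with support `S`. Then for `u ∈ S`, the maximal `μ`-measure achievable by a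
convex subset of `S` not containing `u` is `1 − HD(u,μ)`: every such subset has
`μ`-measure at most `1 − HD(u,μ)`, and some such subset attains it. -/
theorem max_measure_convex_avoiding {d : ℕ} (hd : 0 < d)
    (μ : Measure (Euc d)) [IsProbabilityMeasure μ] (hac : μ ≪ volume)
    (S : Set (Euc d)) (hS : IsSupport μ S) (hconv : Convex ℝ S)
    (u : Euc d) (hu : u ∈ S) :
    (∀ D : Set (Euc d), D ⊆ S → Convex ℝ D → u ∉ D →
      (μ D).toReal ≤ 1 - tukeyDepth μ u) ∧
    (∃ D : Set (Euc d), D ⊆ S ∧ Convex ℝ D ∧ u ∉ D ∧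
      (μ D).toReal = 1 - tukeyDepth μ u) := by
  obtain ⟨vs, hvs, hmin⟩ := MyAux.exists_min hd μ hac u
  have hvs0 : vs ≠ 0 := fun h => by rw [h, norm_zero] at hvs; exact one_ne_zero hvs.symm
  set H : Set (Euc d) := {z : Euc d | ⟪vs, u⟫ ≤ ⟪vs, z⟫} with hHdef
  have hH_meas : MeasurableSet H :=
    (isClosed_le continuous_const (MyAux.continuous_inner_left vs)).measurableSet
  have hH_le_one : μ H ≤ 1 :=
    (measure_mono (Set.subset_univ _)).trans_eq measure_univ
  have hbdd : BddBelow {r : ℝ | ∃ (v : Euc d) (c : ℝ), ‖v‖ = 1 ∧ c ≤ (inner ℝ v u : ℝ) ∧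
      r = (μ {z : Euc d | c ≤ (inner ℝ v z : ℝ)}).toReal} := by
    refine ⟨0, ?_⟩
    rintro r ⟨v, c, -, -, rfl⟩
    exact ENNReal.toReal_nonneg
  have hmem : (μ H).toReal ∈ {r : ℝ | ∃ (v : Euc d) (c : ℝ), ‖v‖ = 1 ∧ c ≤ (inner ℝ v u : ℝ) ∧
      r = (μ {z : Euc d | c ≤ (inner ℝ v z : ℝ)}).toReal} :=
    ⟨vs, ⟪vs, u⟫, hvs, le_refl _, rfl⟩
  have hdepth : tukeyDepth μ u = (μ H).toReal := by
    rw [tukeyDepth]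
    refine le_antisymm (csInf_le hbdd hmem) (le_csInf ⟨_, hmem⟩ ?_)
    rintro r ⟨v, c, hv, hc, rfl⟩
    have h1 : μ H ≤ μ {z : Euc d | ⟪v, u⟫ ≤ ⟪v, z⟫} := hmin v hv
    have h2 : {z : Euc d | ⟪v, u⟫ ≤ ⟪v, z⟫} ⊆ {z : Euc d | c ≤ (inner ℝ v z : ℝ)} :=
      fun z hz => le_trans hc hz
    exact (ENNReal.toReal_le_toReal (measure_ne_top μ _) (measure_ne_top μ _)).mpr
      (h1.trans (measure_mono h2))
  constructor
  · intro D hDS hDconv huD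
    obtain ⟨v, hv, hsep⟩ := MyAux.exists_sep hd hDconv u huD
    have hv0 : v ≠ 0 := fun h => by rw [h, norm_zero] at hv; exact one_ne_zero hv.symm
    have hO_meas : MeasurableSet {z : Euc d | ⟪v, u⟫ < ⟪v, z⟫} :=
      (isOpen_lt continuous_const (MyAux.continuous_inner_left v)).measurableSet
    have hDsub : D ⊆ {z : Euc d | ⟪v, u⟫ < ⟪v, z⟫}ᶜ := by
      intro z hz
      simp only [Set.mem_compl_iff, Set.mem_setOf_eq, not_lt]
      exact hsep z hz
    have h1 : μ D ≤ 1 - μ {z : Euc d | ⟪v, u⟫ < ⟪v, z⟫} := by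
      calc μ D ≤ μ ({z : Euc d | ⟪v, u⟫ < ⟪v, z⟫}ᶜ) := measure_mono hDsub
        _ = μ Set.univ - μ {z : Euc d | ⟪v, u⟫ < ⟪v, z⟫} :=
            measure_compl hO_meas (measure_ne_top μ _)
        _ = 1 - μ {z : Euc d | ⟪v, u⟫ < ⟪v, z⟫} := by rw [measure_univ]
    have h2 : μ H ≤ μ {z : Euc d | ⟪v, u⟫ < ⟪v, z⟫} := by
      rw [← MyAux.measure_halfspace_eq μ hac hv0 _]
      exact hmin v hv
    have hO_le_one : μ {z : Euc d | ⟪v, u⟫ < ⟪v, z⟫} ≤ 1 :=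
      (measure_mono (Set.subset_univ _)).trans_eq measure_univ
    have hle1 : (μ D).toReal ≤ (1 - μ {z : Euc d | ⟪v, u⟫ < ⟪v, z⟫}).toReal :=
      (ENNReal.toReal_le_toReal (measure_ne_top μ _)
        ((tsub_le_self.trans_lt ENNReal.one_lt_top).ne)).mpr h1
    rw [ENNReal.toReal_sub_of_le hO_le_one ENNReal.one_ne_top, ENNReal.toReal_one] at hle1
    have h2r : (μ H).toReal ≤ (μ {z : Euc d | ⟪v, u⟫ < ⟪v, z⟫}).toReal :=
      (ENNReal.toReal_le_toReal (measure_ne_top μ _) (measure_ne_top μ _)).mpr h2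
    rw [hdepth]
    linarith
  · set A : Set (Euc d) := {z : Euc d | ⟪vs, z⟫ < ⟪vs, u⟫} with hA
    have hAH : A = Hᶜ := by
      ext z
      simp [hA, hHdef, not_le]
    have hlin : IsLinearMap ℝ (fun z : Euc d => ⟪vs, z⟫) :=
      ⟨fun a b => inner_add_right vs a b, fun r a => by
        rw [real_inner_smul_right, smul_eq_mul]⟩
    refine ⟨S ∩ A, Set.inter_subset_left, hconv.inter (convex_halfSpace_lt hlin _), ?_, ?_⟩
    · rintro ⟨-, hzA⟩
      rw [hA, Set.mem_setOf_eq] at hzA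
      exact lt_irrefl _ hzA
    · have hmA : μ (S ∩ A) = μ A := by
        refine le_antisymm (measure_mono Set.inter_subset_right) ?_
        calc μ A ≤ μ (A ∩ S) + μ (A \ S) := measure_le_inter_add_diff μ A S
          _ ≤ μ (A ∩ S) + μ Sᶜ := by
              gcongr
              exact fun z hz => hz.2
          _ = μ (A ∩ S) := by rw [hS.2.1, add_zero]
          _ = μ (S ∩ A) := by rw [Set.inter_comm]
      have hAc : μ A = 1 - μ H := by
        rw [hAH, measure_compl hH_meas (measure_ne_top μ _), measure_univ]
      rw [hmA, hAc, ENNReal.toReal_sub_of_le hH_le_one ENNReal.one_ne_top,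
        ENNReal.toReal_one, hdepth]
end
end

section
/- Let μ be a finite Borel measure on ℝ^d that is absolutely continuous with respect to the Lebesgue measure. Then for every a > 0 there exists δ > 0 such that μ(C_{v,c,h}) < a for every unit vector v ∈ S^{d−1}, every c ≥ 0, and every h ∈ (0, δ]. -/
open MeasureTheory Metric Filter
open scoped ENNReal NNReal Topology Pointwise

noncomputable section

/-- **Uniform smallness of thin bands (Lemma A.6).**
If `μ` is a finite measure absolutely continuous with respect to the Lebesgue
measure, then for every `a > 0` there exists `δ > 0` such that
`μ(C_{v,c,h}) < a` for every unit vector `v`, every `c ≥ 0` and every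
`h ∈ (0, δ]`, where `C_{v,c,h} = {x : c ≤ ⟨v,x⟩ ≤ c + h}`. -/
theorem band_measure_small {d : ℕ} (hd : 0 < d)
    (μ : Measure (Euc d)) [IsFiniteMeasure μ] (hac : μ ≪ volume)
    (a : ℝ) (ha : 0 < a) :
    ∃ δ : ℝ, 0 < δ ∧ ∀ v : Euc d, ‖v‖ = 1 → ∀ c : ℝ, 0 ≤ c →
      ∀ h : ℝ, 0 < h → h ≤ δ →
        μ {z : Euc d | c ≤ (inner ℝ v z : ℝ) ∧ (inner ℝ v z : ℝ) ≤ c + h}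
          < ENNReal.ofReal a := by
  classical
  set i0 : Fin d := ⟨0, hd⟩
  set e₀ : Euc d := EuclideanSpace.single i0 (1:ℝ) with he₀
  have he₀norm : ‖e₀‖ = 1 := by simp [he₀, EuclideanSpace.norm_single]
  have hinner0 : ∀ w : Euc d, (inner ℝ e₀ w : ℝ) = w i0 := by
    intro w
    rw [he₀, EuclideanSpace.inner_single_left]
    simp
  -- Step 1: choose R with small measure outside the ball of radius R
  have hcap : (⋂ n : ℕ, (Metric.closedBall (0:Euc d) n)ᶜ) = ∅ := by
    rw [← Set.compl_iUnion, Metric.iUnion_closedBall_nat, Set.compl_univ]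
  have htend : Tendsto (fun n : ℕ => μ (Metric.closedBall (0:Euc d) n)ᶜ)
      atTop (𝓝 0) := by
    have := tendsto_measure_iInter_atTop (μ := μ)
      (s := fun n : ℕ => (Metric.closedBall (0:Euc d) n)ᶜ)
      (fun n => (measurableSet_closedBall.compl).nullMeasurableSet)
      (fun m n hmn => Set.compl_subset_compl.2
        (Metric.closedBall_subset_closedBall (by exact_mod_cast hmn)))
      ⟨0, measure_ne_top μ _⟩
    rw [hcap] at this
    simpa [Function.comp_def] using this
  have ha2 : (0:ℝ≥0∞) < ENNReal.ofReal (a/2) := ENNReal.ofReal_pos.2 (half_pos ha)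
  obtain ⟨n, hn⟩ := (htend.eventually_lt_const ha2).exists
  set R : ℝ := max n 1 with hRdef
  have hR1 : (1:ℝ) ≤ R := le_max_right _ _
  have hRmeas : μ (Metric.closedBall (0:Euc d) R)ᶜ < ENNReal.ofReal (a/2) := by
    refine lt_of_le_of_lt (measure_mono (Set.compl_subset_compl.2
      (Metric.closedBall_subset_closedBall (le_max_left _ _)))) hn
  -- Step 2: epsilon-delta absolute continuity
  have hfin : ∫⁻ x, μ.rnDeriv volume x ∂volume ≠ ∞ := by
    rw [Measure.lintegral_rnDeriv hac]; exact measure_ne_top μ _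
  obtain ⟨δ2, hδ2pos, hδ2⟩ := exists_pos_setLIntegral_lt_of_measure_lt
    (μ := (volume : Measure (Euc d))) hfin (ε := ENNReal.ofReal (a/2)) ha2.ne'
  obtain ⟨ε', hε'0, hε'δ⟩ := exists_between hδ2pos
  have hε'top : ε' ≠ ⊤ := (lt_of_lt_of_le hε'δ le_top).ne
  set t : ℝ := ε'.toReal with htdef
  have ht : 0 < t := ENNReal.toReal_pos hε'0.ne' hε'top
  set K : ℝ := (2*R)^(d-1) with hKdef
  have hK1 : (1:ℝ) ≤ K := one_le_pow₀ (by linarith)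
  have hK0 : (0:ℝ) < K := lt_of_lt_of_le one_pos hK1
  -- Key volume bound for bands intersected with the ball
  have key : ∀ v : Euc d, ‖v‖ = 1 → ∀ c h : ℝ, 0 ≤ h →
      volume ({z : Euc d | c ≤ (inner ℝ v z:ℝ) ∧ (inner ℝ v z:ℝ) ≤ c + h} ∩
        Metric.closedBall 0 R) ≤ ENNReal.ofReal (h * K) := by
    intro v hv c h hh
    set f := Submodule.reflection (ℝ ∙ (v - e₀))ᗮ with hf
    have hfv : f v = e₀ := Submodule.reflection_sub (by rw [hv, he₀norm])
    have hfinner : ∀ z : Euc d, (inner ℝ v z : ℝ) = (inner ℝ e₀ (f z) : ℝ) := by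
      intro z
      rw [← hfv, LinearIsometryEquiv.inner_map_map]
    set A : Set (Euc d) := {w : Euc d | c ≤ (inner ℝ e₀ w : ℝ) ∧ (inner ℝ e₀ w : ℝ) ≤ c + h}
        ∩ Metric.closedBall 0 R with hA
    have hcont : Continuous fun w : Euc d => (inner ℝ e₀ w : ℝ) :=
      Continuous.inner continuous_const continuous_id
    have hAm : MeasurableSet A :=
      ((measurableSet_le measurable_const hcont.measurable).inter
        (measurableSet_le hcont.measurable measurable_const)).inter
        measurableSet_closedBall
    have hpre : {z : Euc d | c ≤ (inner ℝ v z:ℝ) ∧ (inner ℝ v z:ℝ) ≤ c + h} ∩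
        Metric.closedBall 0 R = f ⁻¹' A := by
      ext z
      simp only [Set.mem_inter_iff, Set.mem_setOf_eq, Set.mem_preimage, hA,
        Metric.mem_closedBall, dist_zero_right, f.norm_map, hfinner z]
    set s : Fin d → Set ℝ := fun i => if i = i0 then Set.Icc c (c+h) else Set.Icc (-R) R
      with hs
    have hsm : ∀ i, MeasurableSet (s i) := by
      intro i
      rcases eq_or_ne i i0 with hi | hi <;>
        simp only [hs, hi, if_true, if_false, reduceIte] <;>
        exact measurableSet_Icc
    have hsub : A ⊆ (MeasurableEquiv.toLp 2 (Fin d → ℝ)).symm ⁻¹' (Set.univ.pi s) := by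
      rintro w ⟨⟨h1, h2⟩, h3⟩ i _
      have hwi : (MeasurableEquiv.toLp 2 (Fin d → ℝ)).symm w i = w i := rfl
      rw [hinner0 w] at h1 h2
      rw [hwi, hs]
      by_cases hi : i = i0
      · subst hi; simp only [if_pos rfl]; exact ⟨h1, h2⟩
      · simp only [if_neg hi]
        have habs : |w i| ≤ ‖w‖ := by
          have := abs_real_inner_le_norm (EuclideanSpace.single i (1:ℝ)) w
          rw [EuclideanSpace.inner_single_left] at this
          simpa [EuclideanSpace.norm_single] using this
        have hwR : ‖w‖ ≤ R := by
          rwa [Metric.mem_closedBall, dist_zero_right] at h3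
        exact abs_le.1 (habs.trans hwR)
    have hprod : (∏ i, (volume : Measure ℝ) (s i)) = ENNReal.ofReal (h * K) := by
      rw [← Finset.mul_prod_erase Finset.univ _ (Finset.mem_univ i0)]
      have h1 : (volume : Measure ℝ) (s i0) = ENNReal.ofReal h := by
        simp [hs, Real.volume_Icc]
      have h2 : ∀ i ∈ Finset.univ.erase i0, (volume : Measure ℝ) (s i)
          = ENNReal.ofReal (2*R) := by
        intro i hi
        have hne : i ≠ i0 := Finset.ne_of_mem_erase hi
        simp only [hs, if_neg hne, Real.volume_Icc]
        congr 1
        ring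
      rw [h1, Finset.prod_congr rfl h2, Finset.prod_const,
        Finset.card_erase_of_mem (Finset.mem_univ i0), Finset.card_univ,
        Fintype.card_fin, ← ENNReal.ofReal_pow (by linarith : (0:ℝ) ≤ 2*R),
        ← ENNReal.ofReal_mul hh, hKdef]
    have e1 : volume ({z : Euc d | c ≤ (inner ℝ v z:ℝ) ∧ (inner ℝ v z:ℝ) ≤ c + h} ∩
        Metric.closedBall 0 R) = volume A := by
      rw [hpre]
      exact f.measurePreserving.measure_preimage hAm.nullMeasurableSet
    have e2 : volume ((MeasurableEquiv.toLp 2 (Fin d → ℝ)).symm ⁻¹' (Set.univ.pi s))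
        = (volume : Measure (Fin d → ℝ)) (Set.univ.pi s) :=
      (EuclideanSpace.volume_preserving_symm_measurableEquiv_toLp (Fin d)).measure_preimage
        (MeasurableSet.univ_pi hsm).nullMeasurableSet
    rw [e1]
    refine le_trans (measure_mono hsub) ?_
    rw [e2, volume_pi_pi, hprod]
  -- conclusion
  refine ⟨min 1 (t / K), lt_min one_pos (div_pos ht hK0), ?_⟩
  intro v hv c _hc h hhpos hhle
  set B := {z : Euc d | c ≤ (inner ℝ v z : ℝ) ∧ (inner ℝ v z : ℝ) ≤ c + h} with hB
  have hsmall : μ (B ∩ Metric.closedBall 0 R) < ENNReal.ofReal (a/2) := by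
    rw [← Measure.setLIntegral_rnDeriv hac]
    apply hδ2
    refine lt_of_le_of_lt (key v hv c h hhpos.le) ?_
    have hhK : h * K ≤ t := by
      have h1 : h ≤ t / K := hhle.trans (min_le_right _ _)
      calc h * K ≤ (t/K) * K := mul_le_mul_of_nonneg_right h1 hK0.le
        _ = t := div_mul_cancel₀ t hK0.ne'
    calc ENNReal.ofReal (h*K) ≤ ENNReal.ofReal t := ENNReal.ofReal_le_ofReal hhK
      _ = ε' := ENNReal.ofReal_toReal hε'top
      _ < δ2 := hε'δ
  have hsplit : μ B ≤ μ (B ∩ Metric.closedBall 0 R) + μ (Metric.closedBall (0:Euc d) R)ᶜ := by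
    refine le_trans (measure_mono ?_) (measure_union_le _ _)
    intro z hz
    by_cases hzb : z ∈ Metric.closedBall (0:Euc d) R
    · exact Or.inl ⟨hz, hzb⟩
    · exact Or.inr hzb
  calc μ B ≤ μ (B ∩ Metric.closedBall 0 R) + μ (Metric.closedBall (0:Euc d) R)ᶜ := hsplit
    _ < ENNReal.ofReal (a/2) + ENNReal.ofReal (a/2) := ENNReal.add_lt_add hsmall hRmeas
    _ = ENNReal.ofReal a := by
        rw [← ENNReal.ofReal_add (half_pos ha).le (half_pos ha).le]
        norm_num
end
end
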